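/- arXiv:2209.09896 — 8 statements merged into one kernel-verified Lean document; each statement's English description precedes it below -/
import Mathlib

section
/- Let M be a matroid on a finite ground set E with rank function r, and for a weight vector w ∈ ℝ_{≥0}^E let r_w denote its weighted rank function. Then the infimum over all weight vectors w ∈ ℝ_{≥0}^E of the correlation gap CG(r_w) equals CG(r), the correlation gap of the (unweighted) rank function r. -/
/-!
Greedy peeling writes `r_w` as a nonnegative combination `Σ c_k r(· ∩ A_k)` of rank functions
restricted to the level sets of `w`. Restricting `r` to `A` amounts to evaluating both extensions
of `r` at `x` with the coordinates outside `A` set to `0` (exactly for `F`, as an upper bound for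
`f̂`), so `CG(r) f̂ ≤ F` passes from `r` to each `r(· ∩ A)`; it then passes to nonnegative
combinations because `F` is linear and `f̂` is sublinear. Hence `CG(r) ≤ CG(r_w)`, with equality
for `w = 1`.
-/

open scoped BigOperators Classical

/-- Multilinear extension of a set function: `F(x) = Σ_{S⊆E} f(S) Π_{i∈S} x_i Π_{i∉S} (1−x_i)`. -/
noncomputable def multilinearExt {E : Type*} [Fintype E] (f : Finset E → ℝ) (x : E → ℝ) : ℝ :=
  ∑ S : Finset E, f S * ((∏ i ∈ S, x i) * ∏ i ∈ Sᶜ, (1 - x i))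

/-- Concave extension of a set function: the maximum of `Σ_S λ_S f(S)` over probability
distributions `λ` on subsets with marginals `x`. -/
noncomputable def concaveExt {E : Type*} [Fintype E] (f : Finset E → ℝ) (x : E → ℝ) : ℝ :=
  sSup { v : ℝ | ∃ lam : Finset E → ℝ,
    (∀ S, 0 ≤ lam S) ∧ (∑ S : Finset E, lam S) = 1 ∧
    (∀ i : E, (∑ S ∈ Finset.univ.filter (fun S : Finset E => i ∈ S), lam S) = x i) ∧
    v = ∑ S : Finset E, lam S * f S }

/-- The ratio `F(x)/f̂(x)` with the convention that it equals `1` when `f̂(x) = 0`. -/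
noncomputable def cgRatio {E : Type*} [Fintype E] (f : Finset E → ℝ) (x : E → ℝ) : ℝ :=
  if concaveExt f x = 0 then 1 else multilinearExt f x / concaveExt f x

/-- The correlation gap `CG(f) = inf_{x ∈ [0,1]^E} F(x)/f̂(x)`. -/
noncomputable def corrGap {E : Type*} [Fintype E] (f : Finset E → ℝ) : ℝ :=
  sInf { v : ℝ | ∃ x : E → ℝ, (∀ i, 0 ≤ x i ∧ x i ≤ 1) ∧ v = cgRatio f x }

/-- A matroid on a finite ground set `E`, given by its independent sets. -/
structure FinMatroid (E : Type*) where
  Indep : Finset E → Prop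
  indep_empty : Indep ∅
  indep_subset : ∀ ⦃S T : Finset E⦄, Indep T → S ⊆ T → Indep S
  indep_aug : ∀ ⦃S T : Finset E⦄, Indep S → Indep T → S.card < T.card →
    ∃ i ∈ T, i ∉ S ∧ Indep (insert i S)

/-- Rank function of a matroid: `r(S) = max{|T| : T ⊆ S, T independent}`. -/
noncomputable def FinMatroid.rank {E : Type*} (M : FinMatroid E) (S : Finset E) : ℕ :=
  (S.powerset.filter (fun T => M.Indep T)).sup Finset.card

/-- Weighted rank function: `r_w(S) = max{ Σ_{i∈T} w_i : T ⊆ S, T independent }`. -/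
noncomputable def FinMatroid.wRank {E : Type*} (M : FinMatroid E) (w : E → ℝ)
    (S : Finset E) : ℝ :=
  sSup { v : ℝ | ∃ T : Finset E, T ⊆ S ∧ M.Indep T ∧ v = ∑ i ∈ T, w i }

/-- Girth of a matroid: the smallest size of a dependent set. -/
noncomputable def FinMatroid.girth {E : Type*} (M : FinMatroid E) : ℕ :=
  sInf { n : ℕ | ∃ S : Finset E, ¬ M.Indep S ∧ S.card = n }

namespace FinMatroid

variable {E : Type*} (M : FinMatroid E)

theorem card_le_rank {S T : Finset E} (hTS : T ⊆ S) (hT : M.Indep T) : T.card ≤ M.rank S :=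
  Finset.le_sup (Finset.mem_filter.2 ⟨Finset.mem_powerset.2 hTS, hT⟩)

theorem exists_indep_card_eq_rank (S : Finset E) :
    ∃ T ⊆ S, M.Indep T ∧ T.card = M.rank S := by
  obtain ⟨T, hT, hT_eq⟩ := Finset.exists_mem_eq_sup (S.powerset.filter M.Indep)
    ⟨∅, Finset.mem_filter.2 ⟨Finset.empty_mem_powerset S, M.indep_empty⟩⟩ Finset.card
  rw [Finset.mem_filter, Finset.mem_powerset] at hT
  exact ⟨T, hT.1, hT.2, hT_eq.symm⟩

theorem exists_indep_superset_card_eq_rank {I X : Finset E} (hI : M.Indep I) (hIX : I ⊆ X) :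
    ∃ J, I ⊆ J ∧ J ⊆ X ∧ M.Indep J ∧ J.card = M.rank X := by
  obtain ⟨J, hJ, hJ_max⟩ := (X.powerset.filter fun J => I ⊆ J ∧ M.Indep J).exists_max_image
    Finset.card ⟨I, by simp [hIX, hI]⟩
  simp only [Finset.mem_filter, Finset.mem_powerset] at hJ hJ_max
  obtain ⟨hJX, hIJ, hJ⟩ := hJ
  refine ⟨J, hIJ, hJX, hJ, (M.card_le_rank hJX hJ).antisymm (not_lt.1 fun hlt => ?_)⟩
  obtain ⟨B, hBX, hB, hB_card⟩ := M.exists_indep_card_eq_rank X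
  obtain ⟨i, hiB, hiJ, hiJ_indep⟩ := M.indep_aug hJ hB (hB_card ▸ hlt)
  have := hJ_max (insert i J)
    ⟨Finset.insert_subset (hBX hiB) hJX, hIJ.trans (Finset.subset_insert i J), hiJ_indep⟩
  rw [Finset.card_insert_of_notMem hiJ] at this
  omega

theorem rank_empty : M.rank ∅ = 0 := by
  obtain ⟨T, hT, -, hT_card⟩ := M.exists_indep_card_eq_rank ∅
  rw [← hT_card, Finset.subset_empty.1 hT, Finset.card_empty]

theorem isGreatest_wRank (w : E → ℝ) (S : Finset E) :
    IsGreatest { v : ℝ | ∃ T : Finset E, T ⊆ S ∧ M.Indep T ∧ v = ∑ i ∈ T, w i }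
      (M.wRank w S) := by
  have hfin : { v : ℝ | ∃ T : Finset E, T ⊆ S ∧ M.Indep T ∧ v = ∑ i ∈ T, w i }.Finite :=
    (S.powerset.finite_toSet.image fun T => ∑ i ∈ T, w i).subset
      fun _ ⟨T, hTS, _, hv⟩ => ⟨T, Finset.mem_powerset.2 hTS, hv.symm⟩
  exact ⟨Set.Nonempty.csSup_mem ⟨0, ∅, Finset.empty_subset S, M.indep_empty, by simp⟩ hfin,
    fun _ hv => le_csSup hfin.bddAbove hv⟩

theorem wRank_eq_of_isGreatest {w : E → ℝ} {S : Finset E} {v : ℝ}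
    (h : IsGreatest { v : ℝ | ∃ T : Finset E, T ⊆ S ∧ M.Indep T ∧ v = ∑ i ∈ T, w i } v) :
    M.wRank w S = v :=
  (M.isGreatest_wRank w S).unique h

theorem sum_le_wRank {w : E → ℝ} {S T : Finset E} (hTS : T ⊆ S) (hT : M.Indep T) :
    ∑ i ∈ T, w i ≤ M.wRank w S :=
  (M.isGreatest_wRank w S).2 ⟨T, hTS, hT, rfl⟩

theorem wRank_nonneg (w : E → ℝ) : 0 ≤ M.wRank w := fun S => by
  simpa using M.sum_le_wRank (w := w) (Finset.empty_subset S) M.indep_empty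

theorem wRank_zero : M.wRank 0 = 0 := by
  funext S
  exact M.wRank_eq_of_isGreatest
    ⟨⟨∅, Finset.empty_subset S, M.indep_empty, by simp⟩, by rintro _ ⟨T, -, -, rfl⟩; simp⟩

theorem wRank_one (S : Finset E) : M.wRank 1 S = M.rank S := by
  obtain ⟨B, hBS, hB, hB_card⟩ := M.exists_indep_card_eq_rank S
  refine M.wRank_eq_of_isGreatest ⟨⟨B, hBS, hB, by simp [hB_card]⟩, ?_⟩
  rintro _ ⟨T, hTS, hT, rfl⟩
  simpa using M.card_le_rank hTS hT

theorem wRank_indicator_add {A : Finset E} {c : ℝ} (hc : 0 ≤ c) {w : E → ℝ} (hw : 0 ≤ w)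
    (hwA : ∀ i ∉ A, w i = 0) (S : Finset E) :
    M.wRank (fun i => (if i ∈ A then c else 0) + w i) S = c * M.rank (S ∩ A) + M.wRank w S := by
  refine M.wRank_eq_of_isGreatest ⟨?_, ?_⟩
  · -- an optimal set for `w` may be taken inside `A`, and then extended to a basis of `S ∩ A`
    obtain ⟨T, hTS, hT, hT_eq⟩ := (M.isGreatest_wRank w S).1
    have hTA : ∑ i ∈ T ∩ A, w i = ∑ i ∈ T, w i :=
      Finset.sum_subset Finset.inter_subset_left fun i hiT hiTA =>
        hwA i fun hiA => hiTA (Finset.mem_inter.2 ⟨hiT, hiA⟩)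
    obtain ⟨J, hTJ, hJSA, hJ, hJ_card⟩ := M.exists_indep_superset_card_eq_rank
      (M.indep_subset hT (Finset.inter_subset_left (s₂ := A))) (Finset.inter_subset_inter_right hTS)
    have hJS : J ⊆ S := hJSA.trans Finset.inter_subset_left
    have hJ_eq : ∑ i ∈ J, w i = M.wRank w S :=
      (M.sum_le_wRank hJS hJ).antisymm (hT_eq ▸ hTA ▸
        Finset.sum_le_sum_of_subset_of_nonneg hTJ fun i _ _ => hw i)
    refine ⟨J, hJS, hJ, ?_⟩
    have hJA : ∀ i ∈ J, i ∈ A := fun i hi => (Finset.mem_inter.1 (hJSA hi)).2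
    rw [Finset.sum_add_distrib, Finset.sum_ite_of_true hJA, hJ_eq]
    simp [hJ_card, mul_comm]
  · rintro _ ⟨T, hTS, hT, rfl⟩
    have hTA : ((T ∩ A).card : ℝ) ≤ M.rank (S ∩ A) := by
      exact_mod_cast M.card_le_rank (Finset.inter_subset_inter_right hTS)
        (M.indep_subset hT Finset.inter_subset_left)
    rw [Finset.sum_add_distrib, Finset.sum_ite_mem, Finset.sum_const, nsmul_eq_mul]
    exact add_le_add (by rw [mul_comm]; exact mul_le_mul_of_nonneg_left hTA hc)
      (M.sum_le_wRank hTS hT)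

theorem wRank_induction [Fintype E] {P : (Finset E → ℝ) → Prop} (zero : P 0)
    (step : ∀ (c : ℝ) (A : Finset E) (f : Finset E → ℝ), 0 ≤ c → P f →
      P fun S => c * M.rank (S ∩ A) + f S)
    {w : E → ℝ} (hw : 0 ≤ w) : P (M.wRank w) := by
  suffices ∀ A : Finset E, ∀ w : E → ℝ, 0 ≤ w → (∀ i ∉ A, w i = 0) → P (M.wRank w) from
    this Finset.univ w hw (by simp)
  intro A
  induction A using Finset.strongInduction with
  | H A ih =>
    intro w hw hwA
    rcases A.eq_empty_or_nonempty with rfl | hA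
    · obtain rfl : w = 0 := funext fun i => hwA i (Finset.notMem_empty i)
      rwa [M.wRank_zero]
    -- peel off the smallest weight on `A`; the element attaining it leaves the support
    obtain ⟨i₀, hi₀, hmin⟩ := A.exists_min_image w hA
    set w' : E → ℝ := fun i => w i - if i ∈ A then w i₀ else 0
    have hw' : 0 ≤ w' := fun i => by
      by_cases hi : i ∈ A
      · simpa [w', hi] using hmin i hi
      · simpa [w', hi] using hw i
    have hw'A : ∀ i ∉ A.erase i₀, w' i = 0 := fun i hi => by
      by_cases hiA : i ∈ A
      · obtain rfl : i = i₀ := by simpa [hiA] using hi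
        simp [w', hiA]
      · simp [w', hiA, hwA i hiA]
    have hw_eq : w = fun i => (if i ∈ A then w i₀ else 0) + w' i := by
      funext i; simp [w']
    have hwRank : M.wRank w = fun S => w i₀ * M.rank (S ∩ A) + M.wRank w' S := by
      funext S
      rw [← M.wRank_indicator_add (hw i₀) hw'
        (fun i hi => hw'A i fun h => hi (A.mem_of_mem_erase h)), ← hw_eq]
    rw [hwRank]
    exact step _ _ _ (hw i₀) (ih _ (A.erase_ssubset hi₀) w' hw' hw'A)

end FinMatroid

section Extensions

variable {E : Type*}

noncomputable def multilinearExtOn (s : Finset E) (f : Finset E → ℝ) (x : E → ℝ) : ℝ :=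
  ∑ T ∈ s.powerset, f T * ((∏ i ∈ T, x i) * ∏ i ∈ s \ T, (1 - x i))

theorem multilinearExtOn_insert {s : Finset E} {a : E} (ha : a ∉ s) (f : Finset E → ℝ)
    (x : E → ℝ) :
    multilinearExtOn (insert a s) f x =
      (1 - x a) * multilinearExtOn s f x +
        x a * multilinearExtOn s (fun T => f (insert a T)) x := by
  rw [multilinearExtOn, Finset.sum_powerset_insert ha, multilinearExtOn, multilinearExtOn,
    Finset.mul_sum, Finset.mul_sum]
  congr 1 <;> refine Finset.sum_congr rfl fun T hT => ?_ <;>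
    have haT : a ∉ T := fun h => ha (Finset.mem_powerset.1 hT h)
  · rw [Finset.insert_sdiff_of_notMem _ haT,
      Finset.prod_insert fun h => ha (Finset.mem_sdiff.1 h).1]
    ring
  · rw [Finset.prod_insert haT, Finset.insert_sdiff_insert, Finset.sdiff_insert_of_notMem ha]
    ring

theorem multilinearExtOn_comp_inter (A s : Finset E) (f : Finset E → ℝ) (x : E → ℝ) :
    multilinearExtOn s (fun T => f (T ∩ A)) x = multilinearExtOn s f (A.piecewise x 0) := by
  induction s using Finset.induction_on generalizing f with
  | empty => simp [multilinearExtOn]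
  | insert a s ha ih =>
    rw [multilinearExtOn_insert ha, multilinearExtOn_insert ha]
    by_cases haA : a ∈ A
    · simp only [Finset.insert_inter_of_mem haA, Finset.piecewise_eq_of_mem _ _ _ haA]
      rw [ih, ih (fun T => f (insert a T))]
    · simp only [Finset.insert_inter_of_notMem haA, Finset.piecewise_eq_of_notMem _ _ _ haA,
        Pi.zero_apply, ih]
      ring

variable [Fintype E]

theorem multilinearExt_eq_multilinearExtOn_univ (f : Finset E → ℝ) (x : E → ℝ) :
    multilinearExt f x = multilinearExtOn Finset.univ f x := by
  simp [multilinearExt, multilinearExtOn, Finset.compl_eq_univ_sdiff]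

theorem multilinearExt_comp_inter (A : Finset E) (f : Finset E → ℝ) (x : E → ℝ) :
    multilinearExt (fun S => f (S ∩ A)) x = multilinearExt f (A.piecewise x 0) := by
  simp only [multilinearExt_eq_multilinearExtOn_univ, multilinearExtOn_comp_inter]

theorem multilinearExt_add (f g : Finset E → ℝ) (x : E → ℝ) :
    multilinearExt (fun S => f S + g S) x = multilinearExt f x + multilinearExt g x := by
  simp only [multilinearExt, add_mul, Finset.sum_add_distrib]

theorem multilinearExt_const_mul (c : ℝ) (f : Finset E → ℝ) (x : E → ℝ) :
    multilinearExt (fun S => c * f S) x = c * multilinearExt f x := by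
  simp only [multilinearExt, Finset.mul_sum, mul_assoc]

theorem multilinearExt_nonneg {f : Finset E → ℝ} (hf : 0 ≤ f) {x : E → ℝ}
    (hx : ∀ i, 0 ≤ x i ∧ x i ≤ 1) : 0 ≤ multilinearExt f x :=
  Finset.sum_nonneg fun S _ => mul_nonneg (hf S) <| mul_nonneg
    (Finset.prod_nonneg fun i _ => (hx i).1) (Finset.prod_nonneg fun i _ => sub_nonneg.2 (hx i).2)

theorem le_concaveExt {f : Finset E → ℝ} {x : E → ℝ} {lam : Finset E → ℝ} (h0 : 0 ≤ lam)
    (h1 : ∑ S, lam S = 1)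
    (hx : ∀ i, ∑ S ∈ Finset.univ.filter (fun S : Finset E => i ∈ S), lam S = x i) :
    ∑ S, lam S * f S ≤ concaveExt f x := by
  refine le_csSup ⟨∑ S, |f S|, ?_⟩ ⟨lam, h0, h1, hx, rfl⟩
  rintro _ ⟨μ, hμ0, hμ1, -, rfl⟩
  calc ∑ S, μ S * f S ≤ ∑ S, μ S * ∑ T, |f T| :=
        Finset.sum_le_sum fun S _ => mul_le_mul_of_nonneg_left ((le_abs_self _).trans
          (Finset.single_le_sum (fun T _ => abs_nonneg (f T)) (Finset.mem_univ S))) (hμ0 S)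
    _ = ∑ T, |f T| := by rw [← Finset.sum_mul, hμ1, one_mul]

theorem concaveExt_nonneg {f : Finset E → ℝ} (hf : 0 ≤ f) (x : E → ℝ) : 0 ≤ concaveExt f x :=
  Real.sSup_nonneg <| by
    rintro _ ⟨lam, h0, -, -, rfl⟩
    exact Finset.sum_nonneg fun S _ => mul_nonneg (h0 S) (hf S)

theorem concaveExt_zero_left (x : E → ℝ) : concaveExt 0 x = 0 :=
  (Real.sSup_le (by rintro _ ⟨lam, -, -, -, rfl⟩; simp) le_rfl).antisymm
    (concaveExt_nonneg le_rfl x)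

theorem concaveExt_zero_right {f : Finset E → ℝ} (hf : 0 ≤ f) (hf_empty : f ∅ = 0) :
    concaveExt f 0 = 0 := by
  refine (Real.sSup_le ?_ le_rfl).antisymm (concaveExt_nonneg hf 0)
  rintro _ ⟨lam, h0, -, hx, rfl⟩
  refine (Finset.sum_eq_zero fun S _ => ?_).le
  obtain rfl | ⟨i, hi⟩ := S.eq_empty_or_nonempty
  · rw [hf_empty, mul_zero]
  · have hS : lam S ≤ ∑ T ∈ Finset.univ.filter (fun T : Finset E => i ∈ T), lam T :=
      Finset.single_le_sum (fun T _ => h0 T) (by simpa using hi)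
    rw [hx i, Pi.zero_apply] at hS
    rw [hS.antisymm (h0 S), zero_mul]

theorem concaveExt_add_le {f g : Finset E → ℝ} (hf : 0 ≤ f) (hg : 0 ≤ g) (x : E → ℝ) :
    concaveExt (fun S => f S + g S) x ≤ concaveExt f x + concaveExt g x := by
  refine Real.sSup_le ?_ (add_nonneg (concaveExt_nonneg hf x) (concaveExt_nonneg hg x))
  rintro _ ⟨lam, h0, h1, hx, rfl⟩
  simp only [mul_add, Finset.sum_add_distrib]
  exact add_le_add (le_concaveExt h0 h1 hx) (le_concaveExt h0 h1 hx)

theorem concaveExt_const_mul_le {c : ℝ} (hc : 0 ≤ c) {f : Finset E → ℝ} (hf : 0 ≤ f)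
    (x : E → ℝ) : concaveExt (fun S => c * f S) x ≤ c * concaveExt f x := by
  refine Real.sSup_le ?_ (mul_nonneg hc (concaveExt_nonneg hf x))
  rintro _ ⟨lam, h0, h1, hx, rfl⟩
  simp only [mul_left_comm _ c, ← Finset.mul_sum]
  exact mul_le_mul_of_nonneg_left (le_concaveExt h0 h1 hx) hc

theorem sum_mul_comp_le_concaveExt (f : Finset E → ℝ) (φ : Finset E → Finset E)
    {lam : Finset E → ℝ} (h0 : 0 ≤ lam) (h1 : ∑ S, lam S = 1) :
    ∑ S, lam S * f (φ S) ≤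
      concaveExt f fun i => ∑ S ∈ Finset.univ.filter (fun S => i ∈ φ S), lam S := by
  have hval : ∑ S, lam S * f (φ S) = ∑ U, (∑ S ∈ Finset.univ.filter (φ · = U), lam S) * f U := by
    simp_rw [Finset.sum_mul]
    rw [← Finset.sum_fiberwise Finset.univ φ]
    exact Finset.sum_congr rfl fun U _ => Finset.sum_congr rfl fun S hS => by
      rw [(Finset.mem_filter.1 hS).2]
  rw [hval]
  refine le_concaveExt (fun U => Finset.sum_nonneg fun S _ => h0 S)
    ((Finset.sum_fiberwise Finset.univ φ lam).trans h1) fun i => ?_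
  rw [Finset.sum_fiberwise_eq_sum_filter]
  simp

theorem concaveExt_comp_inter_le {f : Finset E → ℝ} (hf : 0 ≤ f) (A : Finset E) (x : E → ℝ) :
    concaveExt (fun S => f (S ∩ A)) x ≤ concaveExt f (A.piecewise x 0) := by
  refine Real.sSup_le ?_ (concaveExt_nonneg hf _)
  rintro _ ⟨lam, h0, h1, hx, rfl⟩
  convert sum_mul_comp_le_concaveExt f (· ∩ A) h0 h1 using 2
  funext i
  by_cases hiA : i ∈ A
  · simp [hiA, hx i]
  · simp [hiA]

end Extensions

section CorrelationGap

variable {E : Type*} [Fintype E]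

/-- The pointwise form `α f̂ ≤ F` of `α ≤ CG(f)`, which is free of the convention at `f̂ = 0`. -/
def IsCorrGapLowerBound (α : ℝ) (f : Finset E → ℝ) : Prop :=
  ∀ x : E → ℝ, (∀ i, 0 ≤ x i ∧ x i ≤ 1) → α * concaveExt f x ≤ multilinearExt f x

namespace IsCorrGapLowerBound

variable {α : ℝ} {f g : Finset E → ℝ}

theorem zero (α : ℝ) : IsCorrGapLowerBound α (0 : Finset E → ℝ) := fun x _ => by
  simp [concaveExt_zero_left, multilinearExt]

theorem add (hα : 0 ≤ α) (hf0 : 0 ≤ f) (hg0 : 0 ≤ g) (hf : IsCorrGapLowerBound α f)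
    (hg : IsCorrGapLowerBound α g) : IsCorrGapLowerBound α fun S => f S + g S := fun x hx =>
  calc α * concaveExt (fun S => f S + g S) x
      ≤ α * concaveExt f x + α * concaveExt g x := by
        rw [← mul_add]; exact mul_le_mul_of_nonneg_left (concaveExt_add_le hf0 hg0 x) hα
    _ ≤ multilinearExt (fun S => f S + g S) x := by
        rw [multilinearExt_add]; exact add_le_add (hf x hx) (hg x hx)

theorem const_mul (hα : 0 ≤ α) {c : ℝ} (hc : 0 ≤ c) (hf0 : 0 ≤ f)
    (hf : IsCorrGapLowerBound α f) : IsCorrGapLowerBound α fun S => c * f S := fun x hx =>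
  calc α * concaveExt (fun S => c * f S) x
      ≤ c * (α * concaveExt f x) := by
        rw [mul_left_comm]; exact mul_le_mul_of_nonneg_left (concaveExt_const_mul_le hc hf0 x) hα
    _ ≤ multilinearExt (fun S => c * f S) x := by
        rw [multilinearExt_const_mul]; exact mul_le_mul_of_nonneg_left (hf x hx) hc

theorem comp_inter (hα : 0 ≤ α) (hf0 : 0 ≤ f) (hf : IsCorrGapLowerBound α f) (A : Finset E) :
    IsCorrGapLowerBound α fun S => f (S ∩ A) := fun x hx => by
  have hy : ∀ i, 0 ≤ A.piecewise x 0 i ∧ A.piecewise x 0 i ≤ 1 := fun i => by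
    by_cases hi : i ∈ A <;> simp [hi, hx i]
  calc α * concaveExt (fun S => f (S ∩ A)) x
      ≤ α * concaveExt f (A.piecewise x 0) :=
        mul_le_mul_of_nonneg_left (concaveExt_comp_inter_le hf0 A x) hα
    _ ≤ multilinearExt (fun S => f (S ∩ A)) x := by
        rw [multilinearExt_comp_inter]; exact hf _ hy

end IsCorrGapLowerBound

theorem cgRatio_nonneg {f : Finset E → ℝ} (hf : 0 ≤ f) {x : E → ℝ}
    (hx : ∀ i, 0 ≤ x i ∧ x i ≤ 1) : 0 ≤ cgRatio f x := by
  unfold cgRatio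
  split_ifs
  exacts [zero_le_one, div_nonneg (multilinearExt_nonneg hf hx) (concaveExt_nonneg hf x)]

theorem corrGap_le_cgRatio {f : Finset E → ℝ} (hf : 0 ≤ f) {x : E → ℝ}
    (hx : ∀ i, 0 ≤ x i ∧ x i ≤ 1) : corrGap f ≤ cgRatio f x :=
  csInf_le ⟨0, by rintro _ ⟨y, hy, rfl⟩; exact cgRatio_nonneg hf hy⟩ ⟨x, hx, rfl⟩

theorem le_corrGap {α : ℝ} {f : Finset E → ℝ} (hα : α ≤ 1) (hf : 0 ≤ f)
    (h : IsCorrGapLowerBound α f) : α ≤ corrGap f := by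
  refine le_csInf ⟨_, 0, fun _ => ⟨le_rfl, zero_le_one⟩, rfl⟩ ?_
  rintro _ ⟨x, hx, rfl⟩
  unfold cgRatio
  split_ifs with hx0
  · exact hα
  · exact (le_div_iff₀ ((concaveExt_nonneg hf x).lt_of_ne' hx0)).2 (h x hx)

theorem corrGap_nonneg {f : Finset E → ℝ} (hf : 0 ≤ f) : 0 ≤ corrGap f :=
  le_csInf ⟨_, 0, fun _ => ⟨le_rfl, zero_le_one⟩, rfl⟩
    fun _ ⟨_, hx, hv⟩ => hv ▸ cgRatio_nonneg hf hx

theorem corrGap_le_one {f : Finset E → ℝ} (hf : 0 ≤ f) (hf_empty : f ∅ = 0) : corrGap f ≤ 1 := by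
  simpa [cgRatio, concaveExt_zero_right hf hf_empty] using
    corrGap_le_cgRatio hf (x := 0) fun _ => ⟨le_rfl, zero_le_one⟩

theorem isCorrGapLowerBound_corrGap {f : Finset E → ℝ} (hf : 0 ≤ f) :
    IsCorrGapLowerBound (corrGap f) f := fun x hx => by
  rcases (concaveExt_nonneg hf x).eq_or_lt' with hx0 | hx0
  · rw [hx0, mul_zero]; exact multilinearExt_nonneg hf hx
  · have := corrGap_le_cgRatio hf hx
    rwa [cgRatio, if_neg hx0.ne', le_div_iff₀ hx0] at this

end CorrelationGap

/-- For any matroid `M` on a finite ground set with rank function `r`,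
the infimum over all nonnegative weight vectors `w` of the correlation gap of the weighted
rank function `r_w` equals the correlation gap of the (unweighted) rank function `r`. -/
theorem inf_corrGap_wRank_eq_corrGap_rank {E : Type*} [Fintype E] (M : FinMatroid E) :
    sInf { v : ℝ | ∃ w : E → ℝ, (∀ i, 0 ≤ w i) ∧ v = corrGap (M.wRank w) } =
      corrGap (fun S => (M.rank S : ℝ)) := by
  have hr : 0 ≤ fun S => (M.rank S : ℝ) := fun S => Nat.cast_nonneg _
  have hα0 := corrGap_nonneg hr
  have hα1 : corrGap (fun S => (M.rank S : ℝ)) ≤ 1 := corrGap_le_one hr (by simp [M.rank_empty])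
  have hrA (A : Finset E) : 0 ≤ fun S => (M.rank (S ∩ A) : ℝ) := fun S => Nat.cast_nonneg _
  refine IsLeast.csInf_eq ⟨⟨1, fun _ => zero_le_one, by rw [funext M.wRank_one]⟩, ?_⟩
  rintro _ ⟨w, hw, rfl⟩
  refine le_corrGap hα1 (M.wRank_nonneg w) (M.wRank_induction
    (P := fun f => 0 ≤ f ∧ IsCorrGapLowerBound (corrGap fun S => (M.rank S : ℝ)) f)
    ⟨le_rfl, .zero _⟩ ?_ hw).2
  rintro c A f hc ⟨hf0, hf⟩
  have hcr : 0 ≤ fun S => c * (M.rank (S ∩ A) : ℝ) := fun S => mul_nonneg hc (hrA A S)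
  exact ⟨fun S => add_nonneg (hcr S) (hf0 S),
    ((((isCorrGapLowerBound_corrGap hr).comp_inter hα0 hr A).const_mul hα0 hc (hrA A)).add
      hα0 hcr hf0 hf)⟩
end

section
/- Let E be a finite ground set, E' ⊆ E, and let φ: ℕ → ℝ_{≥0} be normalized, nondecreasing and concave (φ(0) = 0, φ(1) = 1, φ(i+1) ≥ φ(i) and φ(i+1) − φ(i) ≥ φ(i+2) − φ(i+1) for all i ∈ ℕ). Define f: 2^E → ℝ_{≥0} by f(S) = φ(|S ∩ E'|). Then the correlation gap of f satisfies CG(f) ≥ α_φ, where α_φ = inf_{λ ≥ 0} E[φ(Poi(λ))] / φ̂(λ) is the Poisson concavity ratio of φ (with the convention that the ratio is 1 when φ̂(λ) = 0). -/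
open scoped BigOperators Classical

/-- Expectation of `φ` under a Poisson random variable with parameter `lam`:
`E[φ(Poi(λ))] = Σ_{k=0}^∞ e^{−λ} λ^k/k! · φ(k)`. -/
noncomputable def poissonExp (φ : ℕ → ℝ) (lam : ℝ) : ℝ :=
  ∑' k : ℕ, Real.exp (-lam) * lam ^ k / (Nat.factorial k : ℝ) * φ k

/-- Piecewise-linear concave extension of `φ : ℕ → ℝ` to the nonnegative reals. -/
noncomputable def phiHat (φ : ℕ → ℝ) (lam : ℝ) : ℝ :=
  φ ⌊lam⌋₊ + (φ (⌊lam⌋₊ + 1) - φ ⌊lam⌋₊) * (lam - (⌊lam⌋₊ : ℝ))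

/-- The Poisson concavity ratio `α_φ = inf_{λ ≥ 0} E[φ(Poi(λ))]/φ̂(λ)`, with the convention
that the ratio is `1` when `φ̂(λ) = 0`. -/
noncomputable def poissonConcavityRatio (φ : ℕ → ℝ) : ℝ :=
  sInf { v : ℝ | ∃ lam : ℝ, 0 ≤ lam ∧
    v = if phiHat φ lam = 0 then 1 else poissonExp φ lam / phiHat φ lam }

/-!
`F(x)` is the expectation of `φ(X)` for `X` a sum of independent Bernoulli(`x i`) variables,
`i ∈ E'`. Replacing them one at a time by Poisson(`x i`) variables can only lower `E[φ(X)]`: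
by concavity `E[φ(k + Poi(b))] ≤ φ(k) + b (φ(k+1) - φ(k)) = E[φ(k + Ber(b))]`, and the sum of
the Poisson variables is Poisson(`L`), `L = ∑_{i ∈ E'} x i`. On the other side, every
distribution with marginals `x` has `E[|S ∩ E'|] = L`, so the tangent of `φ` at `⌊L⌋` bounds
`f̂(x)` by `φ̂(L)`. Hence `F(x) / f̂(x) ≥ E[φ(Poi(L))] / φ̂(L) ≥ α_φ`.
-/

open Finset MeasureTheory ProbabilityTheory
open scoped ENNReal NNReal

namespace ProbabilityTheory

theorem poissonMeasure_zero : Po(0) = Measure.dirac 0 := by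
  refine Measure.ext_of_singleton fun n => ?_
  rw [poissonMeasure_singleton]
  rcases n with _ | n <;> simp

theorem natCast_succ_mul_poissonMeasure_singleton (r : ℝ≥0) (n : ℕ) :
    ((n + 1 : ℕ) : ℝ≥0∞) * Po(r) {n + 1} = r * Po(r) {n} := by
  rw [poissonMeasure_singleton, poissonMeasure_singleton, ← ENNReal.ofReal_natCast,
    ← ENNReal.ofReal_mul (by positivity), ← ENNReal.ofReal_coe_nnreal,
    ← ENNReal.ofReal_mul (by positivity), Nat.factorial_succ]
  congr 1
  push_cast
  field_simp
  ring

theorem lintegral_natCast_poissonMeasure (r : ℝ≥0) : ∫⁻ n, (n : ℝ≥0∞) ∂Po(r) = r := by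
  have hmass : ∑' n, Po(r) {n} = 1 := by
    simpa using (lintegral_countable' (μ := Po(r)) 1).symm
  rw [lintegral_countable', tsum_eq_zero_add' ENNReal.summable]
  simp only [natCast_succ_mul_poissonMeasure_singleton, ENNReal.tsum_mul_left, hmass]
  simp

theorem poissonExp_eq_integral (φ : ℕ → ℝ) (r : ℝ≥0) : poissonExp φ r = ∫ n, φ n ∂Po(r) := by
  simp only [integral_poissonMeasure, smul_eq_mul]
  rfl

end ProbabilityTheory

section ConcaveSequence

variable {φ : ℕ → ℝ}

theorem antitone_slope_of_concave (hconc : ∀ i, φ (i + 2) - φ (i + 1) ≤ φ (i + 1) - φ i) :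
    Antitone fun i => φ (i + 1) - φ i :=
  antitone_nat_of_succ_le (f := fun i => φ (i + 1) - φ i) hconc

theorem le_add_mul_slope_of_concave (hconc : ∀ i, φ (i + 2) - φ (i + 1) ≤ φ (i + 1) - φ i)
    (m d : ℕ) : φ (m + d) ≤ φ m + d * (φ (m + 1) - φ m) := by
  induction d with
  | zero => simp
  | succ d ih =>
    have := antitone_slope_of_concave hconc (Nat.le_add_right m d)
    push_cast
    rw [← add_assoc]
    linarith

theorem add_mul_slope_le_of_concave (hconc : ∀ i, φ (i + 2) - φ (i + 1) ≤ φ (i + 1) - φ i)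
    (k d : ℕ) : φ k + d * (φ (k + d + 1) - φ (k + d)) ≤ φ (k + d) := by
  induction d with
  | zero => simp
  | succ d ih =>
    have hslope := antitone_slope_of_concave hconc (Nat.le_succ (k + d))
    have := mul_le_mul_of_nonneg_left hslope (Nat.cast_nonneg (α := ℝ) d)
    push_cast
    rw [← add_assoc]
    linarith

theorem le_tangent_of_concave (hconc : ∀ i, φ (i + 2) - φ (i + 1) ≤ φ (i + 1) - φ i)
    (m k : ℕ) : φ k ≤ φ m + (φ (m + 1) - φ m) * (k - m) := by
  rcases le_total m k with h | h
  · obtain ⟨d, rfl⟩ := Nat.exists_eq_add_of_le h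
    have := le_add_mul_slope_of_concave hconc m d
    push_cast
    linarith
  · obtain ⟨d, rfl⟩ := Nat.exists_eq_add_of_le h
    have := add_mul_slope_le_of_concave hconc k d
    push_cast
    linarith

end ConcaveSequence

section Bernoulli

variable {E : Type*}

/-- The probability that the random subset of `T` containing each `i` independently with
probability `x i` equals `S`. -/
noncomputable def bernoulliWeight (x : E → ℝ) (T S : Finset E) : ℝ :=
  (∏ i ∈ S, x i) * ∏ i ∈ T \ S, (1 - x i)

noncomputable def bernoulliExp (x : E → ℝ) (T : Finset E) (ψ : Finset E → ℝ) : ℝ :=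
  ∑ S ∈ T.powerset, bernoulliWeight x T S * ψ S

variable {x : E → ℝ}

theorem bernoulliWeight_nonneg (hx : ∀ i, 0 ≤ x i ∧ x i ≤ 1) (T S : Finset E) :
    0 ≤ bernoulliWeight x T S :=
  mul_nonneg (prod_nonneg fun i _ => (hx i).1) (prod_nonneg fun i _ => sub_nonneg.2 (hx i).2)

theorem bernoulliExp_nonneg (hx : ∀ i, 0 ≤ x i ∧ x i ≤ 1) (T : Finset E) {ψ : Finset E → ℝ}
    (hψ : ∀ S, 0 ≤ ψ S) : 0 ≤ bernoulliExp x T ψ :=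
  sum_nonneg fun S _ => mul_nonneg (bernoulliWeight_nonneg hx T S) (hψ S)

theorem bernoulliExp_empty (ψ : Finset E → ℝ) : bernoulliExp x ∅ ψ = ψ ∅ := by
  simp [bernoulliExp, bernoulliWeight]

theorem bernoulliExp_congr {T : Finset E} {ψ ψ' : Finset E → ℝ} (h : ∀ S ⊆ T, ψ S = ψ' S) :
    bernoulliExp x T ψ = bernoulliExp x T ψ' :=
  sum_congr rfl fun S hS => by rw [h S (mem_powerset.1 hS)]

theorem bernoulliWeight_insert {a : E} {T S : Finset E} (ha : a ∉ T) (hS : S ⊆ T) :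
    bernoulliWeight x (insert a T) S = (1 - x a) * bernoulliWeight x T S := by
  rw [bernoulliWeight, bernoulliWeight, insert_sdiff_of_notMem _ fun h => ha (hS h),
    prod_insert fun h => ha (mem_sdiff.1 h).1]
  ring

theorem bernoulliWeight_insert_insert {a : E} {T S : Finset E} (ha : a ∉ T) (hS : S ⊆ T) :
    bernoulliWeight x (insert a T) (insert a S) = x a * bernoulliWeight x T S := by
  rw [bernoulliWeight, bernoulliWeight, insert_sdiff_insert, sdiff_insert_of_notMem ha,
    prod_insert fun h => ha (hS h)]
  ring

theorem bernoulliExp_insert {a : E} {T : Finset E} (ha : a ∉ T) (ψ : Finset E → ℝ) :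
    bernoulliExp x (insert a T) ψ =
      (1 - x a) * bernoulliExp x T ψ + x a * bernoulliExp x T (fun S => ψ (insert a S)) := by
  rw [bernoulliExp, sum_powerset_insert ha, bernoulliExp, bernoulliExp, mul_sum, mul_sum]
  congr 1 <;> refine sum_congr rfl fun S hS => ?_
  · rw [bernoulliWeight_insert ha (mem_powerset.1 hS), mul_assoc]
  · rw [bernoulliWeight_insert_insert ha (mem_powerset.1 hS), mul_assoc]

theorem bernoulliExp_eq_of_subset {T U : Finset E} (hTU : T ⊆ U) {ψ : Finset E → ℝ}
    (hψ : ∀ S, ψ (S ∩ T) = ψ S) : bernoulliExp x U ψ = bernoulliExp x T ψ := by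
  suffices h : ∀ D, Disjoint T D → bernoulliExp x (T ∪ D) ψ = bernoulliExp x T ψ by
    rw [← union_sdiff_of_subset hTU, h _ disjoint_sdiff]
  intro D hTD
  induction D using Finset.induction_on with
  | empty => rw [union_empty]
  | insert a D ha ih =>
    obtain ⟨haT, hTD⟩ := disjoint_insert_right.1 hTD
    have hψa : ∀ S, ψ (insert a S) = ψ S := fun S => by
      rw [← hψ, insert_inter_of_notMem haT, hψ]
    rw [union_insert, bernoulliExp_insert (by simp [haT, ha])]
    simp only [hψa, ih hTD]
    ring

end Bernoulli

section PoissonBernoulli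

open ENNReal (ofReal)

variable {φ : ℕ → ℝ}

theorem lintegral_ofReal_add_le_of_concave
    (hconc : ∀ i, φ (i + 2) - φ (i + 1) ≤ φ (i + 1) - φ i)
    (μ : Measure ℕ) [IsProbabilityMeasure μ] (k : ℕ) :
    ∫⁻ m, ofReal (φ (k + m)) ∂μ ≤
      ofReal (φ k) + ofReal (φ (k + 1) - φ k) * ∫⁻ m, (m : ℝ≥0∞) ∂μ := by
  calc ∫⁻ m, ofReal (φ (k + m)) ∂μ
      ≤ ∫⁻ m, ofReal (φ k) + ofReal (φ (k + 1) - φ k) * m ∂μ := by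
        refine lintegral_mono fun m => ?_
        rw [← ENNReal.ofReal_natCast, ← ENNReal.ofReal_mul' (Nat.cast_nonneg m)]
        refine (ENNReal.ofReal_le_ofReal ?_).trans ENNReal.ofReal_add_le
        linarith [le_add_mul_slope_of_concave hconc k m]
    _ = _ := by
        rw [lintegral_add_left measurable_const, lintegral_const, measure_univ, mul_one,
          lintegral_const_mul _ .of_discrete]

theorem lintegral_ofReal_add_poissonMeasure_le (hnn : ∀ i, 0 ≤ φ i)
    (hmono : ∀ i, φ i ≤ φ (i + 1)) (hconc : ∀ i, φ (i + 2) - φ (i + 1) ≤ φ (i + 1) - φ i)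
    {b : ℝ} (hb : 0 ≤ b ∧ b ≤ 1) (k : ℕ) :
    ∫⁻ m, ofReal (φ (k + m)) ∂Po(b.toNNReal) ≤
      ofReal (1 - b) * ofReal (φ k) + ofReal b * ofReal (φ (k + 1)) := by
  refine (lintegral_ofReal_add_le_of_concave hconc _ k).trans (le_of_eq ?_)
  rw [lintegral_natCast_poissonMeasure]
  change ofReal (φ k) + ofReal (φ (k + 1) - φ k) * ofReal b = _
  rw [← ENNReal.ofReal_mul (sub_nonneg.2 (hmono k)), ← ENNReal.ofReal_add (hnn k)
      (mul_nonneg (sub_nonneg.2 (hmono k)) hb.1),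
    ← ENNReal.ofReal_mul (sub_nonneg.2 hb.2), ← ENNReal.ofReal_mul hb.1,
    ← ENNReal.ofReal_add (mul_nonneg (sub_nonneg.2 hb.2) (hnn k)) (mul_nonneg hb.1 (hnn _))]
  ring_nf

variable {E : Type*} {x : E → ℝ}

theorem lintegral_poissonMeasure_le_bernoulliExp (hx : ∀ i, 0 ≤ x i ∧ x i ≤ 1) (T : Finset E)
    (hnn : ∀ i, 0 ≤ φ i) (hmono : ∀ i, φ i ≤ φ (i + 1))
    (hconc : ∀ i, φ (i + 2) - φ (i + 1) ≤ φ (i + 1) - φ i) :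
    ∫⁻ n, ofReal (φ n) ∂Po((∑ i ∈ T, x i).toNNReal) ≤
      ofReal (bernoulliExp x T fun S => φ S.card) := by
  induction T using Finset.induction_on generalizing φ with
  | empty => simp [poissonMeasure_zero, bernoulliExp_empty]
  | insert a T ha ih =>
    set r := (∑ i ∈ T, x i).toNNReal
    have hrate : (∑ i ∈ insert a T, x i).toNNReal = r + (x a).toNNReal := by
      rw [sum_insert ha, add_comm, Real.toNNReal_add (sum_nonneg fun i _ => (hx i).1) (hx a).1]
    have hshift : (bernoulliExp x T fun S => φ (insert a S).card) =
        bernoulliExp x T fun S => φ (S.card + 1) :=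
      bernoulliExp_congr fun S hS => by rw [card_insert_of_notMem fun h => ha (hS h)]
    rw [hrate]
    calc ∫⁻ n, ofReal (φ n) ∂Po(r + (x a).toNNReal)
        = ∫⁻ k, ∫⁻ m, ofReal (φ (k + m)) ∂Po((x a).toNNReal) ∂Po(r) := by
          rw [← poissonMeasure_conv_poissonMeasure, Measure.lintegral_conv .of_discrete]
      _ ≤ ∫⁻ k, ofReal (1 - x a) * ofReal (φ k) + ofReal (x a) * ofReal (φ (k + 1)) ∂Po(r) :=
          lintegral_mono fun k => lintegral_ofReal_add_poissonMeasure_le hnn hmono hconc (hx a) k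
      _ = ofReal (1 - x a) * ∫⁻ k, ofReal (φ k) ∂Po(r)
            + ofReal (x a) * ∫⁻ k, ofReal (φ (k + 1)) ∂Po(r) := by
          rw [lintegral_add_left .of_discrete, lintegral_const_mul _ .of_discrete,
            lintegral_const_mul _ .of_discrete]
      _ ≤ ofReal (1 - x a) * ofReal (bernoulliExp x T fun S => φ S.card)
            + ofReal (x a) * ofReal (bernoulliExp x T fun S => φ (S.card + 1)) := by
          gcongr
          exacts [ih hnn hmono hconc, ih (fun i => hnn _) (fun i => hmono _) (fun i => hconc _)]
      _ = ofReal (bernoulliExp x (insert a T) fun S => φ S.card) := by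
          rw [bernoulliExp_insert ha, hshift, ← ENNReal.ofReal_mul (sub_nonneg.2 (hx a).2),
            ← ENNReal.ofReal_mul (hx a).1, ← ENNReal.ofReal_add
              (mul_nonneg (sub_nonneg.2 (hx a).2) (bernoulliExp_nonneg hx T fun S => hnn _))
              (mul_nonneg (hx a).1 (bernoulliExp_nonneg hx T fun S => hnn _))]

end PoissonBernoulli

section Extensions

variable {E : Type*} [Fintype E] {x : E → ℝ}

theorem multilinearExt_eq_bernoulliExp (f : Finset E → ℝ) (x : E → ℝ) :
    multilinearExt f x = bernoulliExp x univ f := by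
  simp only [multilinearExt, bernoulliExp, bernoulliWeight, powerset_univ, compl_eq_univ_sdiff,
    mul_comm (f _)]

theorem sum_bernoulliWeight_mul (x : E → ℝ) (ψ : Finset E → ℝ) :
    ∑ S, bernoulliWeight x univ S * ψ S = bernoulliExp x univ ψ := by
  rw [bernoulliExp, powerset_univ]

theorem bernoulliWeight_univ_feasible (hx : ∀ i, 0 ≤ x i ∧ x i ≤ 1) :
    (∀ S, 0 ≤ bernoulliWeight x univ S) ∧ ∑ S, bernoulliWeight x univ S = 1 ∧
      ∀ i, ∑ S ∈ univ.filter (fun S => i ∈ S), bernoulliWeight x univ S = x i := by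
  refine ⟨bernoulliWeight_nonneg hx univ, ?_, fun i => ?_⟩
  · simpa [bernoulliExp_empty] using (sum_bernoulliWeight_mul x fun _ => 1).trans
      (bernoulliExp_eq_of_subset (empty_subset univ) fun _ => rfl)
  · calc ∑ S ∈ univ.filter (fun S => i ∈ S), bernoulliWeight x univ S
        = bernoulliExp x univ fun S => if i ∈ S then 1 else 0 := by
          rw [← sum_bernoulliWeight_mul, sum_filter]
          simp only [mul_ite, mul_one, mul_zero]
      _ = bernoulliExp x {i} fun S => if i ∈ S then 1 else 0 :=
          bernoulliExp_eq_of_subset (subset_univ _) fun S => by simp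
      _ = x i := by
          rw [← insert_empty_eq, bernoulliExp_insert (notMem_empty i)]
          simp [bernoulliExp_empty]

theorem multilinearExt_le_concaveExt (f : Finset E → ℝ) (hx : ∀ i, 0 ≤ x i ∧ x i ≤ 1) :
    multilinearExt f x ≤ concaveExt f x := by
  obtain ⟨hw0, hw1, hwx⟩ := bernoulliWeight_univ_feasible hx
  refine le_csSup ⟨∑ S, |f S|, ?_⟩ ⟨_, hw0, hw1, hwx, ?_⟩
  · rintro _ ⟨lam, hlam0, hlam1, -, rfl⟩
    refine sum_le_sum fun S _ => ?_
    have : lam S ≤ 1 := hlam1 ▸ single_le_sum (fun T _ => hlam0 T) (mem_univ S)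
    calc lam S * f S ≤ lam S * |f S| := mul_le_mul_of_nonneg_left (le_abs_self _) (hlam0 S)
      _ ≤ |f S| := mul_le_of_le_one_left (abs_nonneg _) this
  · rw [multilinearExt_eq_bernoulliExp, sum_bernoulliWeight_mul]

theorem sum_mul_card_inter_eq {lam : Finset E → ℝ}
    (hmarg : ∀ i, ∑ S ∈ univ.filter (fun S => i ∈ S), lam S = x i) (E' : Finset E) :
    ∑ S, lam S * ((S ∩ E').card : ℝ) = ∑ i ∈ E', x i := by
  have hcard : ∀ S : Finset E, ((S ∩ E').card : ℝ) = ∑ i ∈ E', if i ∈ S then 1 else 0 :=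
    fun S => by rw [inter_comm, ← filter_mem_eq_inter, natCast_card_filter]
  simp_rw [hcard, mul_sum, mul_ite, mul_one, mul_zero]
  rw [sum_comm]
  exact sum_congr rfl fun i _ => by rw [← hmarg, sum_filter]

theorem sum_mul_le_phiHat {φ : ℕ → ℝ} (hconc : ∀ i, φ (i + 2) - φ (i + 1) ≤ φ (i + 1) - φ i)
    (E' : Finset E) {lam : Finset E → ℝ} (hlam0 : ∀ S, 0 ≤ lam S) (hlam1 : ∑ S, lam S = 1)
    (hmarg : ∀ i, ∑ S ∈ univ.filter (fun S => i ∈ S), lam S = x i) :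
    ∑ S, lam S * φ (S ∩ E').card ≤ phiHat φ (∑ i ∈ E', x i) := by
  set m := ⌊∑ i ∈ E', x i⌋₊
  calc ∑ S, lam S * φ (S ∩ E').card
      ≤ ∑ S, lam S * (φ m + (φ (m + 1) - φ m) * ((S ∩ E').card - m)) :=
        sum_le_sum fun S _ => mul_le_mul_of_nonneg_left (le_tangent_of_concave hconc m _) (hlam0 S)
    _ = (∑ S, lam S) * (φ m - (φ (m + 1) - φ m) * m)
          + (φ (m + 1) - φ m) * ∑ S, lam S * ((S ∩ E').card : ℝ) := by
        rw [sum_mul, mul_sum, ← sum_add_distrib]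
        exact sum_congr rfl fun S _ => by ring
    _ = phiHat φ (∑ i ∈ E', x i) := by
        rw [hlam1, sum_mul_card_inter_eq hmarg, phiHat]
        ring

theorem concaveExt_le_phiHat {φ : ℕ → ℝ} (hx : ∀ i, 0 ≤ x i ∧ x i ≤ 1) (E' : Finset E)
    (hconc : ∀ i, φ (i + 2) - φ (i + 1) ≤ φ (i + 1) - φ i) :
    concaveExt (fun S => φ (S ∩ E').card) x ≤ phiHat φ (∑ i ∈ E', x i) := by
  obtain ⟨hw0, hw1, hwx⟩ := bernoulliWeight_univ_feasible hx
  refine csSup_le ⟨_, _, hw0, hw1, hwx, rfl⟩ ?_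
  rintro _ ⟨lam, hlam0, hlam1, hmarg, rfl⟩
  exact sum_mul_le_phiHat hconc E' hlam0 hlam1 hmarg

end Extensions

theorem poissonExp_le_multilinearExt {E : Type*} [Fintype E] {x : E → ℝ}
    (hx : ∀ i, 0 ≤ x i ∧ x i ≤ 1) (E' : Finset E) {φ : ℕ → ℝ} (hnn : ∀ i, 0 ≤ φ i)
    (hmono : ∀ i, φ i ≤ φ (i + 1)) (hconc : ∀ i, φ (i + 2) - φ (i + 1) ≤ φ (i + 1) - φ i) :
    poissonExp φ (∑ i ∈ E', x i) ≤ multilinearExt (fun S => φ (S ∩ E').card) x := by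
  have hmarginal : multilinearExt (fun S => φ (S ∩ E').card) x =
      bernoulliExp x E' fun S => φ S.card := by
    rw [multilinearExt_eq_bernoulliExp,
      bernoulliExp_eq_of_subset (subset_univ E') fun S => by rw [inter_assoc, inter_self]]
    exact bernoulliExp_congr fun S hS => by rw [inter_eq_left.2 hS]
  rw [← Real.coe_toNNReal _ (sum_nonneg fun i _ => (hx i).1), poissonExp_eq_integral,
    integral_eq_lintegral_of_nonneg_ae (ae_of_all _ hnn) .of_discrete, hmarginal]
  exact ENNReal.toReal_le_of_le_ofReal (bernoulliExp_nonneg hx E' fun S => hnn _)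
    (lintegral_poissonMeasure_le_bernoulliExp hx E' hnn hmono hconc)

section PoissonConcavityRatio

variable {φ : ℕ → ℝ}

theorem phiHat_nonneg (hnn : ∀ i, 0 ≤ φ i) {lam : ℝ} (hlam : 0 ≤ lam) : 0 ≤ phiHat φ lam := by
  have h₀ : 0 ≤ lam - ⌊lam⌋₊ := sub_nonneg.2 (Nat.floor_le hlam)
  have h₁ : lam - ⌊lam⌋₊ ≤ 1 := by linarith [Nat.lt_floor_add_one lam]
  have : phiHat φ lam = (1 - (lam - ⌊lam⌋₊)) * φ ⌊lam⌋₊ + (lam - ⌊lam⌋₊) * φ (⌊lam⌋₊ + 1) := by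
    rw [phiHat]; ring
  rw [this]
  exact add_nonneg (mul_nonneg (by linarith) (hnn _)) (mul_nonneg h₀ (hnn _))

theorem poissonExp_nonneg (hnn : ∀ i, 0 ≤ φ i) {lam : ℝ} (hlam : 0 ≤ lam) :
    0 ≤ poissonExp φ lam :=
  tsum_nonneg fun k => mul_nonneg (by positivity) (hnn k)

theorem poissonConcavityRatio_le (hnn : ∀ i, 0 ≤ φ i) {lam : ℝ} (hlam : 0 ≤ lam) :
    poissonConcavityRatio φ ≤
      if phiHat φ lam = 0 then 1 else poissonExp φ lam / phiHat φ lam := by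
  refine csInf_le ⟨0, ?_⟩ ⟨lam, hlam, rfl⟩
  rintro _ ⟨l, hl, rfl⟩
  split_ifs
  exacts [zero_le_one, div_nonneg (poissonExp_nonneg hnn hl) (phiHat_nonneg hnn hl)]

theorem poissonConcavityRatio_le_one (hnn : ∀ i, 0 ≤ φ i) : poissonConcavityRatio φ ≤ 1 := by
  have hexp : poissonExp φ 0 = φ 0 := by
    rw [← NNReal.coe_zero, poissonExp_eq_integral, poissonMeasure_zero, integral_dirac]
  refine (poissonConcavityRatio_le hnn le_rfl).trans_eq ?_
  have hhat : phiHat φ 0 = φ 0 := by simp [phiHat]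
  rw [hexp, hhat]
  split_ifs with h
  exacts [rfl, div_self h]

end PoissonConcavityRatio

theorem corrGap_ge_poissonConcavityRatio_general {E : Type*} [Fintype E] (E' : Finset E)
    (φ : ℕ → ℝ) (hnn : ∀ i, 0 ≤ φ i)
    (hmono : ∀ i, φ i ≤ φ (i + 1))
    (hconc : ∀ i, φ (i + 2) - φ (i + 1) ≤ φ (i + 1) - φ i) :
    corrGap (fun S : Finset E => φ ((S ∩ E').card)) ≥ poissonConcavityRatio φ := by
  refine le_csInf ⟨_, fun _ => 0, fun _ => ⟨le_rfl, zero_le_one⟩, rfl⟩ ?_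
  rintro _ ⟨x, hx, rfl⟩
  have hL : 0 ≤ ∑ i ∈ E', x i := sum_nonneg fun i _ => (hx i).1
  have hPF := poissonExp_le_multilinearExt hx E' hnn hmono hconc
  have hFf := multilinearExt_le_concaveExt (fun S => φ (S ∩ E').card) hx
  have hfP := concaveExt_le_phiHat hx E' hconc
  have hF : 0 ≤ multilinearExt (fun S => φ (S ∩ E').card) x :=
    (poissonExp_nonneg hnn hL).trans hPF
  rw [cgRatio]
  split_ifs with hf0
  · exact poissonConcavityRatio_le_one hnn
  · have hf : 0 < concaveExt (fun S => φ (S ∩ E').card) x :=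
      (hF.trans hFf).lt_of_ne' hf0
    refine (poissonConcavityRatio_le hnn hL).trans ?_
    rw [if_neg (hf.trans_le hfP).ne']
    exact div_le_div₀ hF hPF hf hfP

/-- For `E' ⊆ E` and a normalized nondecreasing concave `φ : ℕ → ℝ_{≥0}`,
the correlation gap of `f(S) = φ(|S ∩ E'|)` is at least the Poisson concavity ratio of `φ`. -/
theorem corrGap_ge_poissonConcavityRatio {E : Type*} [Fintype E] (E' : Finset E)
    (φ : ℕ → ℝ) (hnn : ∀ i, 0 ≤ φ i) (h0 : φ 0 = 0) (h1 : φ 1 = 1)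
    (hmono : ∀ i, φ i ≤ φ (i + 1))
    (hconc : ∀ i, φ (i + 2) - φ (i + 1) ≤ φ (i + 1) - φ i) :
    corrGap (fun S : Finset E => φ ((S ∩ E').card)) ≥ poissonConcavityRatio φ :=
  corrGap_ge_poissonConcavityRatio_general E' φ hnn hmono hconc
end

section
/- For every positive integer ℓ, the identity 1 − 1/e + (e^{−ℓ}/ℓ) · Σ_{i=0}^{ℓ−1} (ℓ−i) · ( C(ℓ,i)(e−1)^i − ℓ^i/i! ) = 1 − e^{−ℓ} ℓ^ℓ / ℓ! holds. -/
/-!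
Split the sum in two. Since `(ℓ - i) C(ℓ, i) = ℓ C(ℓ - 1, i)`, the binomial part is
`ℓ ((e - 1) + 1)^(ℓ - 1) = ℓ e^(ℓ - 1)`, which turns `e^(-ℓ)/ℓ` times it into `1/e`. The Poisson
part telescopes, because `(x - i) x^i / i!` is the increment of `i x^i / i!`.
-/

open Finset

lemma sum_range_sub_mul_choose_mul_pow {R : Type*} [CommSemiring R] (n : ℕ) (x : R) :
    ∑ i ∈ range n, ((n - i : ℕ) : R) * n.choose i * x ^ i = n * (x + 1) ^ (n - 1) := by
  cases n with
  | zero => simp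
  | succ m =>
    calc ∑ i ∈ range (m + 1), ((m + 1 - i : ℕ) : R) * (m + 1).choose i * x ^ i
        = ∑ i ∈ range (m + 1), ((m + 1 : ℕ) : R) * (x ^ i * 1 ^ (m - i) * m.choose i) := by
          refine sum_congr rfl fun i _ => ?_
          rw [mul_comm ((m + 1 - i : ℕ) : R), ← Nat.cast_mul, ← Nat.choose_mul_succ_eq]
          push_cast
          ring
      _ = ((m + 1 : ℕ) : R) * (x + 1) ^ (m + 1 - 1) := by rw [← mul_sum, ← add_pow]; simp

lemma sum_range_sub_mul_pow_div_factorial {K : Type*} [Field K] [CharZero K] (n : ℕ) (x : K) :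
    ∑ i ∈ range n, (x - i) * (x ^ i / i.factorial) = n * x ^ n / n.factorial := by
  have telescope : ∀ i : ℕ, (x - i) * (x ^ i / i.factorial)
      = ((i + 1 : ℕ) : K) * x ^ (i + 1) / (i + 1).factorial - i * x ^ i / i.factorial := by
    intro i
    rw [Nat.factorial_succ]
    push_cast
    field_simp
    ring
  simp only [telescope]
  rw [sum_range_sub (fun i : ℕ => (i : K) * x ^ i / i.factorial)]
  simp

/-- For every positive integer `ℓ`,
`1 − 1/e + (e^{−ℓ}/ℓ) Σ_{i=0}^{ℓ−1} (ℓ−i)(C(ℓ,i)(e−1)^i − ℓ^i/i!) = 1 − e^{−ℓ} ℓ^ℓ/ℓ!`. -/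
theorem uniform_bound_identity (ℓ : ℕ) (hℓ : 1 ≤ ℓ) :
    1 - 1 / Real.exp 1 + (Real.exp (-(ℓ : ℝ)) / (ℓ : ℝ)) *
      ∑ i ∈ Finset.range ℓ, ((ℓ - i : ℕ) : ℝ) *
        ((ℓ.choose i : ℝ) * (Real.exp 1 - 1) ^ i - (ℓ : ℝ) ^ i / (Nat.factorial i : ℝ))
    = 1 - Real.exp (-(ℓ : ℝ)) * (ℓ : ℝ) ^ ℓ / (Nat.factorial ℓ : ℝ) := by
  have binomial_part := sum_range_sub_mul_choose_mul_pow ℓ (Real.exp 1 - 1)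
  have poisson_part : ∑ i ∈ range ℓ, ((ℓ - i : ℕ) : ℝ) * ((ℓ : ℝ) ^ i / i.factorial)
      = ℓ * (ℓ : ℝ) ^ ℓ / ℓ.factorial := by
    rw [← sum_range_sub_mul_pow_div_factorial]
    refine sum_congr rfl fun i hi => ?_
    rw [Nat.cast_sub (mem_range.mp hi).le]
  have exp_pow : Real.exp (-(ℓ : ℝ)) * Real.exp 1 ^ (ℓ - 1) = 1 / Real.exp 1 := by
    rw [← Real.exp_nat_mul, ← Real.exp_add, Nat.cast_sub hℓ, one_div, ← Real.exp_neg]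
    congr 1
    push_cast
    ring
  rw [sub_add_cancel] at binomial_part
  simp only [mul_sub, sum_sub_distrib, ← mul_assoc, poisson_part, binomial_part]
  have hℓ' : (ℓ : ℝ) ≠ 0 := by positivity
  rw [div_mul_cancel₀ _ hℓ', exp_pow]
  field_simp
  ring
end

section
/- Let E be a finite ground set, E' ⊆ E, and let φ: ℕ → ℝ_{≥0} be normalized, nondecreasing and concave (φ(0) = 0, φ(1) = 1, φ(i+1) ≥ φ(i) and φ(i+1) − φ(i) ≥ φ(i+2) − φ(i+1) for all i ∈ ℕ). Define f: 2^E → ℝ_{≥0} by f(S) = φ(|S ∩ E'|). Then for every x ∈ [0,1]^E, the concave extension of f satisfies f̂(x) = φ̂(x(E')), where x(E') = Σ_{i∈E'} x_i. -/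
open scoped BigOperators Classical

/-!
Let `t = x(E')` and `k = ⌊t⌋`. Concavity of `φ` puts its graph below the chord through
`(k, φ k)` and `(k + 1, φ (k + 1))`, which is affine; so averaging over any distribution of
sets with marginals `x` gives at most the chord's value at the mean `t`, i.e. `φ̂ t`.
Equality is attained by pipage rounding: `x` is a distribution of sets `S` with
`|S ∩ E'| ∈ {k, k + 1}`, where `φ` agrees with the chord. The rounding is by induction on the
number of fractional coordinates: one outside `E'` is split into `0` and `1`; two inside `E'`
are moved in opposite directions, keeping `x(E')`, until one of them becomes integral; a single
one inside `E'` is split into `0` and `1` directly.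
-/

open Finset

def chord (φ : ℕ → ℝ) (k : ℕ) (r : ℝ) : ℝ := φ k + (φ (k + 1) - φ k) * (r - k)

theorem le_chord {φ : ℕ → ℝ} (hφ : Antitone fun i => φ (i + 1) - φ i) (k n : ℕ) :
    φ n ≤ chord φ k n := by
  have telescope (m j : ℕ) : φ (m + j) - φ m = ∑ i ∈ range j, (φ (m + i + 1) - φ (m + i)) :=
    (sum_range_sub (fun i => φ (m + i)) j).symm
  unfold chord
  rcases le_or_gt k n with hkn | hnk
  · obtain ⟨j, rfl⟩ := Nat.exists_eq_add_of_le hkn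
    have : φ (k + j) - φ k ≤ j * (φ (k + 1) - φ k) := by
      rw [telescope k j]
      simpa only [card_range, nsmul_eq_mul] using
        sum_le_card_nsmul (range j) _ _ fun i _ => hφ (Nat.le_add_right k i)
    push_cast
    linarith
  · obtain ⟨j, rfl⟩ := Nat.exists_eq_add_of_le hnk.le
    have : j * (φ (n + j + 1) - φ (n + j)) ≤ φ (n + j) - φ n := by
      rw [telescope n j]
      simpa only [card_range, nsmul_eq_mul] using card_nsmul_le_sum (range j) _ _ fun i hi =>
        hφ (by rw [mem_range] at hi; omega : n + i ≤ n + j)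
    push_cast
    linarith

theorem mix_update_one_update_zero {ι R : Type*} [CommRing R] (y : ι → R) (a : ι) :
    (fun i => y a * Function.update y a 1 i + (1 - y a) * Function.update y a 0 i) = y := by
  funext i
  rcases eq_or_ne i a with rfl | h
  · simp
  · simp only [Function.update_of_ne h]
    ring

section
variable {E : Type*} [Fintype E]

structure HasMarginals (lam : Finset E → ℝ) (y : E → ℝ) : Prop where
  nonneg : ∀ S, 0 ≤ lam S
  sum_eq_one : ∑ S : Finset E, lam S = 1
  marginal : ∀ i : E, ∑ S ∈ univ.filter (fun S : Finset E => i ∈ S), lam S = y i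

theorem hasMarginals_dirac (T : Finset E) :
    HasMarginals (fun S => if S = T then 1 else 0) (fun i => if i ∈ T then 1 else 0) where
  nonneg S := by positivity
  sum_eq_one := by simp
  marginal i := by simp [sum_ite_eq']

theorem HasMarginals.mix {lam' lam'' : Finset E → ℝ} {y' y'' : E → ℝ} {c : ℝ}
    (h' : HasMarginals lam' y') (h'' : HasMarginals lam'' y'') (hc0 : 0 ≤ c) (hc1 : c ≤ 1) :
    HasMarginals (fun S => c * lam' S + (1 - c) * lam'' S)
      (fun i => c * y' i + (1 - c) * y'' i) where
  nonneg S := add_nonneg (mul_nonneg hc0 (h'.nonneg S)) (mul_nonneg (by linarith) (h''.nonneg S))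
  sum_eq_one := by
    rw [sum_add_distrib, ← mul_sum, ← mul_sum, h'.sum_eq_one, h''.sum_eq_one]
    ring
  marginal i := by
    rw [sum_add_distrib, ← mul_sum, ← mul_sum, h'.marginal, h''.marginal]

theorem HasMarginals.sum_mul_card_inter {lam : Finset E → ℝ} {y : E → ℝ}
    (h : HasMarginals lam y) (A : Finset E) :
    ∑ S, lam S * #(S ∩ A) = ∑ i ∈ A, y i := by
  simp_rw [← h.marginal, sum_filter]
  rw [sum_comm]
  refine sum_congr rfl fun S _ => ?_
  rw [← sum_filter, sum_const, filter_mem_eq_inter, nsmul_eq_mul, inter_comm, mul_comm]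

theorem HasMarginals.sum_mul_chord {lam : Finset E → ℝ} {y : E → ℝ}
    (h : HasMarginals lam y) (A : Finset E) (φ : ℕ → ℝ) (k : ℕ) :
    ∑ S, lam S * chord φ k #(S ∩ A) = chord φ k (∑ i ∈ A, y i) := by
  have affine (S : Finset E) : lam S * chord φ k #(S ∩ A) =
      (φ k - (φ (k + 1) - φ k) * k) * lam S + (φ (k + 1) - φ k) * (lam S * #(S ∩ A)) := by
    unfold chord; ring
  simp_rw [affine, sum_add_distrib, ← mul_sum, h.sum_eq_one, h.sum_mul_card_inter]
  unfold chord; ring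

theorem exists_hasMarginals_card_inter_eq_of_integral {y : E → ℝ}
    (hy : ∀ i, y i = 0 ∨ y i = 1) (A : Finset E) :
    ∃ lam, HasMarginals lam y ∧ ∀ S, lam S ≠ 0 → (#(S ∩ A) : ℝ) = ∑ i ∈ A, y i := by
  set T := univ.filter fun i => y i = 1
  have hT : (fun i => if i ∈ T then (1 : ℝ) else 0) = y := by
    funext i
    rcases hy i with h | h <;> simp [T, h]
  have hdirac := hasMarginals_dirac T
  rw [hT] at hdirac
  refine ⟨_, hdirac, fun S hS => ?_⟩
  obtain rfl : S = T := by
    by_contra h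
    exact hS (if_neg h)
  simpa [sum_ite_eq'] using hdirac.sum_mul_card_inter A

noncomputable def fractional (y : E → ℝ) : Finset E := univ.filter fun i => y i ∈ Set.Ioo 0 1

theorem eq_zero_or_eq_one_of_notMem_fractional {y : E → ℝ} {i : E} (hy : y i ∈ Set.Icc 0 1)
    (hi : i ∉ fractional y) : y i = 0 ∨ y i = 1 := by
  simp only [fractional, mem_filter, mem_univ, true_and, Set.mem_Ioo, not_and, not_lt] at hi
  rcases hy.1.eq_or_lt with h | h
  · exact .inl h.symm
  · exact .inr (le_antisymm hy.2 (hi h))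

theorem card_fractional_lt {y y' : E → ℝ} {j : E}
    (hchange : ∀ i, y' i ≠ y i → i ∈ fractional y) (hj : j ∈ fractional y)
    (hj' : j ∉ fractional y') : #(fractional y') < #(fractional y) := by
  refine card_lt_card ((ssubset_iff_of_subset fun i hi => ?_).2 ⟨j, hj, hj'⟩)
  by_cases h : y' i = y i
  · simpa [fractional, h] using hi
  · exact hchange i h

def HasRounding (A : Finset E) (y : E → ℝ) : Prop :=
  ∃ lam, HasMarginals lam y ∧ ∀ S, lam S ≠ 0 → |(#(S ∩ A) : ℝ) - ∑ i ∈ A, y i| < 1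

theorem HasRounding.mix {A : Finset E} {y y' y'' : E → ℝ} {c : ℝ}
    (h' : HasRounding A y') (h'' : HasRounding A y'') (hc0 : 0 ≤ c) (hc1 : c ≤ 1)
    (hy : y = fun i => c * y' i + (1 - c) * y'' i)
    (hs' : ∑ i ∈ A, y' i = ∑ i ∈ A, y i) (hs'' : ∑ i ∈ A, y'' i = ∑ i ∈ A, y i) :
    HasRounding A y := by
  obtain ⟨lam', hlam', hsupp'⟩ := h'
  obtain ⟨lam'', hlam'', hsupp''⟩ := h''
  refine ⟨_, hy ▸ hlam'.mix hlam'' hc0 hc1, fun S hS => ?_⟩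
  by_cases h : lam' S = 0
  · rw [← hs'']
    exact hsupp'' S fun h' => hS (by simp [h, h'])
  · rw [← hs']
    exact hsupp' S h

section Rounding

variable {A : Finset E} {y : E → ℝ}

theorem hasRounding_of_integral (hy : ∀ i, y i = 0 ∨ y i = 1) : HasRounding A y := by
  obtain ⟨lam, hlam, hsupp⟩ := exists_hasMarginals_card_inter_eq_of_integral hy A
  exact ⟨lam, hlam, fun S hS => by simp [hsupp S hS]⟩

theorem hasRounding_of_mem_fractional_notMem (hy : ∀ i, y i ∈ Set.Icc 0 1)
    (ih : ∀ y' : E → ℝ, (∀ i, y' i ∈ Set.Icc 0 1) → #(fractional y') < #(fractional y) →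
      HasRounding A y')
    {a : E} (ha : a ∈ fractional y) (haA : a ∉ A) : HasRounding A y := by
  have round (v : ℝ) (hv : v = 0 ∨ v = 1) : HasRounding A (Function.update y a v) := by
    refine ih _ (fun i => ?_) (card_fractional_lt (j := a) (fun i hi => ?_) ha ?_)
    · rcases eq_or_ne i a with rfl | h
      · rcases hv with rfl | rfl <;> simp
      · simpa [h] using hy i
    · rcases eq_or_ne i a with rfl | h
      · exact ha
      · simp [h] at hi
    · rcases hv with rfl | rfl <;> simp [fractional]
  exact (round 1 (.inr rfl)).mix (round 0 (.inl rfl)) (hy a).1 (hy a).2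
    (mix_update_one_update_zero y a).symm (sum_update_of_notMem haA _ _)
    (sum_update_of_notMem haA _ _)

theorem hasRounding_of_pair_mem_fractional (hy : ∀ i, y i ∈ Set.Icc 0 1)
    (ih : ∀ y' : E → ℝ, (∀ i, y' i ∈ Set.Icc 0 1) → #(fractional y') < #(fractional y) →
      HasRounding A y')
    {a b : E} (hab : a ≠ b) (ha : a ∈ fractional y) (hb : b ∈ fractional y)
    (haA : a ∈ A) (hbA : b ∈ A) : HasRounding A y := by
  set shift : ℝ → E → ℝ :=
    fun s i => y i + s * ((Pi.single a 1 : E → ℝ) i - (Pi.single b 1 : E → ℝ) i)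
  have shift_a (s : ℝ) : shift s a = y a + s := by simp [shift, hab]
  have shift_b (s : ℝ) : shift s b = y b - s := by simp [shift, hab.symm, sub_eq_add_neg]
  have shift_of_ne (s : ℝ) {i : E} (hia : i ≠ a) (hib : i ≠ b) : shift s i = y i := by
    simp [shift, hia, hib]
  have shift_sum (s : ℝ) : ∑ i ∈ A, shift s i = ∑ i ∈ A, y i := by
    simp [shift, sum_add_distrib, ← mul_sum, sum_sub_distrib, sum_pi_single', haA, hbA]
  have round (s : ℝ) (hsa : y a + s ∈ Set.Icc 0 1) (hsb : y b - s ∈ Set.Icc 0 1)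
      (hend : y a + s ∉ Set.Ioo 0 1 ∨ y b - s ∉ Set.Ioo 0 1) : HasRounding A (shift s) := by
    refine ih _ (fun i => ?_) ?_
    · rcases eq_or_ne i a with rfl | hia
      · rwa [shift_a]
      rcases eq_or_ne i b with rfl | hib
      · rwa [shift_b]
      · rw [shift_of_ne s hia hib]; exact hy i
    have hchange (i : E) (hi : shift s i ≠ y i) : i ∈ fractional y := by
      rcases eq_or_ne i a with rfl | hia
      · exact ha
      rcases eq_or_ne i b with rfl | hib
      · exact hb
      · exact absurd (shift_of_ne s hia hib) hi
    rcases hend with hend | hend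
    · exact card_fractional_lt hchange ha (by simpa [fractional, shift_a] using hend)
    · exact card_fractional_lt hchange hb (by simpa [fractional, shift_b] using hend)
  obtain ⟨hya0, hya1⟩ := (mem_filter.1 ha).2
  obtain ⟨hyb0, hyb1⟩ := (mem_filter.1 hb).2
  set ε := min (1 - y a) (y b)
  set ε' := min (y a) (1 - y b)
  have hε : 0 < ε := lt_min (by linarith) hyb0
  have hε' : 0 < ε' := lt_min hya0 (by linarith)
  have round_up : HasRounding A (shift ε) := by
    have h1 : ε ≤ 1 - y a := min_le_left _ _
    have h2 : ε ≤ y b := min_le_right _ _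
    refine round ε ⟨by linarith, by linarith⟩ ⟨by linarith, by linarith⟩ ?_
    rcases min_choice (1 - y a) (y b) with h | h
    · left; simp [ε, h]
    · right; simp [ε, h]
  have round_down : HasRounding A (shift (-ε')) := by
    have h1 : ε' ≤ y a := min_le_left _ _
    have h2 : ε' ≤ 1 - y b := min_le_right _ _
    refine round (-ε') ⟨by linarith, by linarith⟩ ⟨by linarith, by linarith⟩ ?_
    rcases min_choice (y a) (1 - y b) with h | h
    · left; simp [ε', h]
    · right; simp [ε', h]
  -- `y = shift 0` lies on the segment between `shift (-ε')` and `shift ε`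
  refine round_up.mix round_down (c := ε' / (ε + ε')) (by positivity)
    ((div_le_one (by positivity)).2 (by linarith)) ?_ (shift_sum _) (shift_sum _)
  funext i
  simp only [shift]
  field_simp
  ring

theorem hasRounding_of_fractional_eq_singleton (hy : ∀ i, y i ∈ Set.Icc 0 1) {a : E}
    (hfrac : fractional y = {a}) (haA : a ∈ A) : HasRounding A y := by
  have integral (v : ℝ) (hv : v = 0 ∨ v = 1) : ∀ i, Function.update y a v i = 0 ∨
      Function.update y a v i = 1 := by
    intro i
    rcases eq_or_ne i a with rfl | h
    · simpa using hv
    · simpa [h] using eq_zero_or_eq_one_of_notMem_fractional (hy i) (by simp [hfrac, h])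
  obtain ⟨lam1, hlam1, hcard1⟩ :=
    exists_hasMarginals_card_inter_eq_of_integral (integral 1 (.inr rfl)) A
  obtain ⟨lam0, hlam0, hcard0⟩ :=
    exists_hasMarginals_card_inter_eq_of_integral (integral 0 (.inl rfl)) A
  obtain ⟨hya0, hya1⟩ := (mem_filter.1 (hfrac ▸ mem_singleton_self a)).2
  have hsum_y := sum_eq_add_sum_sdiff_singleton_of_mem haA y
  have hmix := hlam1.mix hlam0 hya0.le hya1.le
  rw [mix_update_one_update_zero] at hmix
  refine ⟨_, hmix, fun S hS => ?_⟩
  by_cases h : lam1 S = 0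
  · rw [hcard0 S fun h' => hS (by simp [h, h']), sum_update_of_mem haA, hsum_y, abs_lt]
    constructor <;> linarith
  · rw [hcard1 S h, sum_update_of_mem haA, hsum_y, abs_lt]
    constructor <;> linarith

end Rounding

theorem hasRounding (A : Finset E) {y : E → ℝ} (hy : ∀ i, y i ∈ Set.Icc 0 1) :
    HasRounding A y := by
  induction hn : #(fractional y) using Nat.strong_induction_on generalizing y with
  | _ n ih =>
  replace ih : ∀ y' : E → ℝ, (∀ i, y' i ∈ Set.Icc 0 1) → #(fractional y') < #(fractional y) →
      HasRounding A y' := fun y' hy' hlt => ih _ (hn ▸ hlt) hy' rfl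
  by_cases hout : ∃ a ∈ fractional y, a ∉ A
  · obtain ⟨a, ha, haA⟩ := hout
    exact hasRounding_of_mem_fractional_notMem hy ih ha haA
  push Not at hout
  rcases lt_or_ge 1 #(fractional y) with hcard | hcard
  · obtain ⟨a, ha, b, hb, hab⟩ := one_lt_card.1 hcard
    exact hasRounding_of_pair_mem_fractional hy ih hab ha hb (hout a ha) (hout b hb)
  rcases Nat.le_one_iff_eq_zero_or_eq_one.1 hcard with hcard | hcard
  · refine hasRounding_of_integral fun i => eq_zero_or_eq_one_of_notMem_fractional (hy i) ?_
    simp [card_eq_zero.1 hcard]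
  · obtain ⟨a, hfrac⟩ := card_eq_one.1 hcard
    exact hasRounding_of_fractional_eq_singleton hy hfrac (hout a (by simp [hfrac]))

theorem concaveExt_eq_of_forall_le_of_exists_eq {f : Finset E → ℝ} {x : E → ℝ} {v : ℝ}
    (hle : ∀ lam, HasMarginals lam x → ∑ S, lam S * f S ≤ v)
    (hex : ∃ lam, HasMarginals lam x ∧ ∑ S, lam S * f S = v) : concaveExt f x = v := by
  obtain ⟨lam, hlam, hv⟩ := hex
  refine IsGreatest.csSup_eq ⟨⟨lam, hlam.1, hlam.2, hlam.3, hv.symm⟩, ?_⟩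
  rintro _ ⟨lam, h0, h1, h2, rfl⟩
  exact hle lam ⟨h0, h1, h2⟩

end

theorem phiHat_eq_chord (φ : ℕ → ℝ) (t : ℝ) : phiHat φ t = chord φ ⌊t⌋₊ t := rfl

theorem apply_eq_chord_floor_of_abs_sub_lt (φ : ℕ → ℝ) {t : ℝ} (ht : 0 ≤ t) {n : ℕ}
    (hn : |(n : ℝ) - t| < 1) : φ n = chord φ ⌊t⌋₊ n := by
  obtain ⟨hlo, hhi⟩ := abs_lt.1 hn
  have hk : (⌊t⌋₊ : ℝ) ≤ t := Nat.floor_le ht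
  have hk' : t < ⌊t⌋₊ + 1 := Nat.lt_floor_add_one t
  have hlo' : ⌊t⌋₊ < n + 1 := by exact_mod_cast (by linarith : (⌊t⌋₊ : ℝ) < n + 1)
  have hhi' : n < ⌊t⌋₊ + 2 := by exact_mod_cast (by linarith : (n : ℝ) < ⌊t⌋₊ + 2)
  rcases (by omega : n = ⌊t⌋₊ ∨ n = ⌊t⌋₊ + 1) with rfl | rfl <;> simp [chord]

theorem concaveExt_eq_phiHat_general {E : Type*} [Fintype E] (E' : Finset E)
    (φ : ℕ → ℝ)
    (hconc : ∀ i, φ (i + 2) - φ (i + 1) ≤ φ (i + 1) - φ i)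
    (x : E → ℝ) (hx : ∀ i, 0 ≤ x i ∧ x i ≤ 1) :
    concaveExt (fun S : Finset E => φ ((S ∩ E').card)) x = phiHat φ (∑ i ∈ E', x i) := by
  set t := ∑ i ∈ E', x i
  have ht : 0 ≤ t := sum_nonneg fun i _ => (hx i).1
  rw [phiHat_eq_chord]
  refine concaveExt_eq_of_forall_le_of_exists_eq (fun lam hlam => ?_) ?_
  · calc ∑ S, lam S * φ #(S ∩ E')
        ≤ ∑ S, lam S * chord φ ⌊t⌋₊ #(S ∩ E') := sum_le_sum fun S _ =>
          mul_le_mul_of_nonneg_left (le_chord (antitone_nat_of_succ_le hconc) _ _) (hlam.nonneg S)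
      _ = chord φ ⌊t⌋₊ t := hlam.sum_mul_chord E' φ _
  · obtain ⟨lam, hlam, hsupp⟩ := hasRounding E' hx
    refine ⟨lam, hlam, ?_⟩
    calc ∑ S, lam S * φ #(S ∩ E')
        = ∑ S, lam S * chord φ ⌊t⌋₊ #(S ∩ E') := sum_congr rfl fun S _ => by
          by_cases h : lam S = 0
          · simp [h]
          · rw [apply_eq_chord_floor_of_abs_sub_lt φ ht (hsupp S h)]
      _ = chord φ ⌊t⌋₊ t := hlam.sum_mul_chord E' φ _

/-- For `E' ⊆ E` and a normalized nondecreasing concave `φ : ℕ → ℝ_{≥0}`,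
the concave extension of `f(S) = φ(|S ∩ E'|)` satisfies `f̂(x) = φ̂(x(E'))` for every
`x ∈ [0,1]^E`. -/
theorem concaveExt_eq_phiHat {E : Type*} [Fintype E] (E' : Finset E)
    (φ : ℕ → ℝ) (hnn : ∀ i, 0 ≤ φ i) (h0 : φ 0 = 0) (h1 : φ 1 = 1)
    (hmono : ∀ i, φ i ≤ φ (i + 1))
    (hconc : ∀ i, φ (i + 2) - φ (i + 1) ≤ φ (i + 1) - φ i)
    (x : E → ℝ) (hx : ∀ i, 0 ≤ x i ∧ x i ≤ 1) :
    concaveExt (fun S : Finset E => φ ((S ∩ E').card)) x = phiHat φ (∑ i ∈ E', x i) :=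
  concaveExt_eq_phiHat_general E' φ hconc x hx
end

section
/- Let f: [0,1]^n → ℝ be a function such that for every x ∈ [0,1]^n and every pair of indices i, j ∈ [n], the function t ↦ f(x + t(e_i − e_j)) is concave on the set { t ∈ [−1,1] : x + t(e_i − e_j) ∈ [0,1]^n }. Then for every y ∈ [0,1]^n with Σ_{i=1}^n y_i ∈ ℤ, there exists z ∈ {0,1}^n such that Σ_{i=1}^n z_i = Σ_{i=1}^n y_i and f(z) ≤ f(y). -/
/-!
Pipage rounding. If `y` has a fractional coordinate `i` and an integral coordinate sum, it has a
second fractional coordinate `j`. The line `t ↦ y + t • (e_i - e_j)` preserves the coordinate sum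
and `f` is concave along it, so `f y` dominates the value of `f` at one of the two points where the
line leaves the cube; there `i` or `j` has become integral. Repeating this strictly shrinks the set
of fractional coordinates, and ends at a `0/1` vector.
-/

open Finset

variable {ι : Type*}

noncomputable def fractionalCoords [Fintype ι] (x : ι → ℝ) : Finset ι :=
  {i | x i ∈ Set.Ioo 0 1}

lemma mem_fractionalCoords [Fintype ι] {x : ι → ℝ} {i : ι} :
    i ∈ fractionalCoords x ↔ x i ∈ Set.Ioo 0 1 := by
  simp [fractionalCoords]

lemma eq_zero_or_eq_one_of_notMem_fractionalCoords [Fintype ι] {x : ι → ℝ} (hx : x ∈ Set.Icc 0 1)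
    {i : ι} (hi : i ∉ fractionalCoords x) : x i = 0 ∨ x i = 1 := by
  rw [mem_fractionalCoords, Set.mem_Ioo, not_and_or, not_lt, not_lt] at hi
  rcases hi with hi | hi
  · exact Or.inl (le_antisymm hi (hx.1 i))
  · exact Or.inr (le_antisymm (hx.2 i) hi)

lemma exists_ne_mem_fractionalCoords [Fintype ι] [DecidableEq ι] {x : ι → ℝ}
    (hx : x ∈ Set.Icc 0 1) (hsum : ∃ m : ℤ, ∑ k, x k = m) {i : ι} (hi : i ∈ fractionalCoords x) :
    ∃ j ≠ i, j ∈ fractionalCoords x := by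
  by_contra! hint
  obtain ⟨m, hm⟩ := hsum
  have hfloor : ∀ k ∈ univ.erase i, x k = ⌊x k⌋ := fun k hk => by
    rcases eq_zero_or_eq_one_of_notMem_fractionalCoords hx (hint k (ne_of_mem_erase hk)) with h | h
      <;> simp [h]
  have hxi : x i = ((m - ∑ k ∈ univ.erase i, ⌊x k⌋ : ℤ) : ℝ) := by
    rw [← add_sum_erase _ _ (mem_univ i), sum_congr rfl hfloor] at hm
    push_cast
    linarith
  obtain ⟨hpos, hlt⟩ := mem_fractionalCoords.1 hi
  rw [hxi] at hpos hlt
  have : (0 : ℤ) < m - ∑ k ∈ univ.erase i, ⌊x k⌋ := by exact_mod_cast hpos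
  have : m - ∑ k ∈ univ.erase i, ⌊x k⌋ < 1 := by exact_mod_cast hlt
  omega

section Transfer

variable [DecidableEq ι] {i j : ι} (x : ι → ℝ) (t : ℝ)

lemma add_smul_single_sub_single_apply_left (hij : i ≠ j) :
    (x + t • (Pi.single i 1 - Pi.single j 1) : ι → ℝ) i = x i + t := by
  simp [hij]

lemma add_smul_single_sub_single_apply_right (hij : i ≠ j) :
    (x + t • (Pi.single i 1 - Pi.single j 1) : ι → ℝ) j = x j - t := by
  simp [hij.symm, sub_eq_add_neg]

lemma add_smul_single_sub_single_apply_of_ne {k : ι} (hki : k ≠ i) (hkj : k ≠ j) :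
    (x + t • (Pi.single i 1 - Pi.single j 1) : ι → ℝ) k = x k := by
  simp [hki, hkj]

lemma sum_add_smul_single_sub_single [Fintype ι] :
    ∑ k, (x + t • (Pi.single i 1 - Pi.single j 1) : ι → ℝ) k = ∑ k, x k := by
  simp [sum_add_distrib, ← mul_sum, sum_sub_distrib]

variable {x t}

lemma add_smul_single_sub_single_mem_Icc (hx : x ∈ Set.Icc 0 1) (hij : i ≠ j)
    (hi : x i + t ∈ Set.Icc 0 1) (hj : x j - t ∈ Set.Icc 0 1) :
    x + t • (Pi.single i 1 - Pi.single j 1) ∈ Set.Icc 0 1 := by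
  suffices ∀ k, (x + t • (Pi.single i 1 - Pi.single j 1) : ι → ℝ) k ∈ Set.Icc 0 1 from
    ⟨fun k => (this k).1, fun k => (this k).2⟩
  intro k
  rcases eq_or_ne k i with rfl | hki
  · rwa [add_smul_single_sub_single_apply_left _ _ hij]
  rcases eq_or_ne k j with rfl | hkj
  · rwa [add_smul_single_sub_single_apply_right _ _ hij]
  rw [add_smul_single_sub_single_apply_of_ne _ _ hki hkj]
  exact ⟨hx.1 k, hx.2 k⟩

lemma fractionalCoords_add_smul_single_sub_single_ssubset [Fintype ι] (hij : i ≠ j)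
    (hi : i ∈ fractionalCoords x) (hj : j ∈ fractionalCoords x)
    (hend : x i + t ∉ Set.Ioo 0 1 ∨ x j - t ∉ Set.Ioo 0 1) :
    fractionalCoords (x + t • (Pi.single i 1 - Pi.single j 1) : ι → ℝ) ⊂ fractionalCoords x := by
  refine (ssubset_iff_of_subset fun k hk => ?_).2 ?_
  · rcases eq_or_ne k i with rfl | hki
    · exact hi
    rcases eq_or_ne k j with rfl | hkj
    · exact hj
    rwa [mem_fractionalCoords, add_smul_single_sub_single_apply_of_ne _ _ hki hkj,
      ← mem_fractionalCoords] at hk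
  · rcases hend with h | h
    · refine ⟨i, hi, ?_⟩
      rwa [mem_fractionalCoords, add_smul_single_sub_single_apply_left _ _ hij]
    · refine ⟨j, hj, ?_⟩
      rwa [mem_fractionalCoords, add_smul_single_sub_single_apply_right _ _ hij]

end Transfer

lemma exists_pipage_step [Fintype ι] [DecidableEq ι] {f : (ι → ℝ) → ℝ} {y : ι → ℝ} {i j : ι}
    (hconc : ConcaveOn ℝ
        { t : ℝ | t ∈ Set.Icc (-1 : ℝ) 1 ∧ y + t • (Pi.single i 1 - Pi.single j 1) ∈ Set.Icc 0 1 }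
        (fun t => f (y + t • (Pi.single i 1 - Pi.single j 1))))
    (hy : y ∈ Set.Icc 0 1) (hij : i ≠ j) (hi : i ∈ fractionalCoords y)
    (hj : j ∈ fractionalCoords y) :
    ∃ y' ∈ Set.Icc (0 : ι → ℝ) 1, ∑ k, y' k = ∑ k, y k ∧ f y' ≤ f y ∧
      fractionalCoords y' ⊂ fractionalCoords y := by
  obtain ⟨hi0, hi1⟩ := mem_fractionalCoords.1 hi
  obtain ⟨hj0, hj1⟩ := mem_fractionalCoords.1 hj
  set d : ι → ℝ := Pi.single i 1 - Pi.single j 1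
  have hmem : ∀ t, y i + t ∈ Set.Icc 0 1 → y j - t ∈ Set.Icc 0 1 →
      t ∈ { t : ℝ | t ∈ Set.Icc (-1 : ℝ) 1 ∧ y + t • d ∈ Set.Icc 0 1 } :=
    fun t hit hjt => ⟨⟨by linarith [hit.1], by linarith [hit.2]⟩,
      add_smul_single_sub_single_mem_Icc hy hij hit hjt⟩
  have hstep : ∀ t, y i + t ∈ Set.Icc 0 1 → y j - t ∈ Set.Icc 0 1 →
      (y i + t ∉ Set.Ioo 0 1 ∨ y j - t ∉ Set.Ioo 0 1) → f (y + t • d) ≤ f y →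
      ∃ y' ∈ Set.Icc (0 : ι → ℝ) 1, ∑ k, y' k = ∑ k, y k ∧ f y' ≤ f y ∧
        fractionalCoords y' ⊂ fractionalCoords y :=
    fun t hit hjt hend hle => ⟨_, add_smul_single_sub_single_mem_Icc hy hij hit hjt,
      sum_add_smul_single_sub_single y t, hle,
      fractionalCoords_add_smul_single_sub_single_ssubset hij hi hj hend⟩
  -- the line leaves the cube at `t = a` and `t = -b`
  set a := min (1 - y i) (y j)
  set b := min (y i) (1 - y j)
  have ha : 0 < a := lt_min (by linarith) hj0
  have hb : 0 < b := lt_min hi0 (by linarith)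
  have hai : y i + a ∈ Set.Icc 0 1 := ⟨by linarith, by linarith [min_le_left (1 - y i) (y j)]⟩
  have haj : y j - a ∈ Set.Icc 0 1 := ⟨by linarith [min_le_right (1 - y i) (y j)], by linarith⟩
  have hbi : y i + -b ∈ Set.Icc 0 1 := ⟨by linarith [min_le_left (y i) (1 - y j)], by linarith⟩
  have hbj : y j - -b ∈ Set.Icc 0 1 := ⟨by linarith, by linarith [min_le_right (y i) (1 - y j)]⟩
  have hmin := hconc.min_le_of_mem_Icc (hmem _ hbi hbj) (hmem _ hai haj)
    (show (0 : ℝ) ∈ Set.Icc (-b) a from ⟨by linarith, ha.le⟩)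
  simp only [zero_smul, add_zero] at hmin
  rcases min_choice (f (y + (-b) • d)) (f (y + a • d)) with h | h <;> rw [h] at hmin
  · refine hstep _ hbi hbj ?_ hmin
    rcases min_choice (y i) (1 - y j) with hb' | hb' <;> rw [show b = _ from hb']
    · exact Or.inl (by simp)
    · exact Or.inr (by simp)
  · refine hstep _ hai haj ?_ hmin
    rcases min_choice (1 - y i) (y j) with ha' | ha' <;> rw [show a = _ from ha']
    · exact Or.inl (by simp)
    · exact Or.inr (by simp)

/-- **pipage rounding observation.** If `f : [0,1]^n → ℝ` is concave along
every direction `e_i − e_j` (on the segment staying in the cube), then every `y ∈ [0,1]^n`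
whose coordinate sum is an integer can be rounded to a `0/1` vector `z` with the same
coordinate sum and `f(z) ≤ f(y)`. -/
theorem pipage_rounding {n : ℕ} (f : (Fin n → ℝ) → ℝ)
    (hconc : ∀ x ∈ Set.Icc (0 : Fin n → ℝ) 1, ∀ i j : Fin n,
      ConcaveOn ℝ
        { t : ℝ | t ∈ Set.Icc (-1 : ℝ) 1 ∧
            x + t • (Pi.single i 1 - Pi.single j 1) ∈ Set.Icc (0 : Fin n → ℝ) 1 }
        (fun t => f (x + t • (Pi.single i 1 - Pi.single j 1))))
    (y : Fin n → ℝ) (hy : y ∈ Set.Icc (0 : Fin n → ℝ) 1)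
    (hyint : ∃ m : ℤ, (∑ i, y i) = (m : ℝ)) :
    ∃ z : Fin n → ℝ, (∀ i, z i = 0 ∨ z i = 1) ∧ (∑ i, z i) = (∑ i, y i) ∧ f z ≤ f y := by
  induction hN : (fractionalCoords y).card using Nat.strong_induction_on generalizing y with
  | _ N ih =>
    obtain hempty | ⟨i, hi⟩ := (fractionalCoords y).eq_empty_or_nonempty
    · exact ⟨y, fun k => eq_zero_or_eq_one_of_notMem_fractionalCoords hy (by simp [hempty]),
        rfl, le_rfl⟩
    obtain ⟨j, hji, hj⟩ := exists_ne_mem_fractionalCoords hy hyint hi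
    obtain ⟨y', hy', hsum, hle, hss⟩ := exists_pipage_step (hconc y hy i j) hy hji.symm hi hj
    obtain ⟨z, hz01, hzsum, hzle⟩ :=
      ih _ (hN ▸ card_lt_card hss) y' hy' (hsum ▸ hyint) rfl
    exact ⟨z, hz01, hzsum.trans hsum, hzle.trans hle⟩
end

section
/- Let ρ: (0,∞) → ℝ be defined by ρ(t) = (1 − e^{−t})/t. Then for every k ∈ ℕ and every t > 0, the k-th derivative of ρ satisfies ρ^{(k)}(t) = (−1)^k · k! · (1 − e^{−t} Σ_{i=0}^{k} t^i/i!) / t^{k+1}. Consequently, for every t > 0: if k is even then ρ^{(k)}(t) > 0, and if k is odd then ρ^{(k)}(t) < 0. -/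
/-- The function `ρ(t) = (1 − e^{−t})/t`. -/
noncomputable def rhoFun : ℝ → ℝ := fun t => (1 - Real.exp (-t)) / t

/-!
Write `N_k(t) = 1 - e^{-t} ∑_{i ≤ k} t^i/i!`. Differentiating the exponential partial sum lowers
its degree by one, so `N_k' = e^{-t} t^k/k!`, and `N_{k+1} = N_k - e^{-t} t^{k+1}/(k+1)!`.
With these two identities the quotient rule shows that `(-1)^k k! N_k(t)/t^{k+1}` differentiates
to the same expression with `k + 1`; as it equals `ρ` for `k = 0`, it is `ρ^{(k)}` on `(0, ∞)`.
The sign follows from `∑_{i ≤ k} t^i/i! < e^t` for `t > 0`, i.e. `N_k(t) > 0`.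
-/

open Finset Real Nat

theorem hasDerivAt_sum_range_succ_pow_div_factorial {𝕜 : Type*} [NontriviallyNormedField 𝕜]
    [CharZero 𝕜] (k : ℕ) (t : 𝕜) :
    HasDerivAt (fun s => ∑ i ∈ range (k + 1), s ^ i / (i ! : 𝕜))
      (∑ i ∈ range k, t ^ i / (i ! : 𝕜)) t := by
  have h : HasDerivAt (fun s => ∑ i ∈ range (k + 1), s ^ i / (i ! : 𝕜))
      (∑ i ∈ range (k + 1), (i : 𝕜) * t ^ (i - 1) / (i ! : 𝕜)) t :=
    HasDerivAt.fun_sum fun i _ => by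
      simpa [div_eq_mul_inv] using (hasDerivAt_pow i t).mul_const ((i ! : 𝕜)⁻¹)
  convert h using 1
  rw [sum_range_succ']
  simp only [Nat.cast_zero, zero_mul, zero_div, add_zero]
  refine sum_congr rfl fun i _ => ?_
  have : (i ! : 𝕜) ≠ 0 := Nat.cast_ne_zero.2 (factorial_ne_zero i)
  rw [Nat.factorial_succ]
  push_cast
  field_simp

theorem hasDerivAt_one_sub_exp_neg_mul_sum_range (k : ℕ) (t : ℝ) :
    HasDerivAt (fun s => 1 - exp (-s) * ∑ i ∈ range (k + 1), s ^ i / (i ! : ℝ))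
      (exp (-t) * (t ^ k / k !)) t := by
  have hexp : HasDerivAt (fun s => exp (-s)) (-exp (-t)) t := by
    simpa using (hasDerivAt_neg t).exp
  refine ((hexp.mul (hasDerivAt_sum_range_succ_pow_div_factorial k t)).const_sub 1).congr_deriv ?_
  rw [sum_range_succ]
  ring

theorem exp_neg_mul_sum_range_pow_div_factorial_lt_one (n : ℕ) {t : ℝ} (ht : 0 < t) :
    exp (-t) * ∑ i ∈ range n, t ^ i / (i ! : ℝ) < 1 := by
  have hsum : ∑ i ∈ range n, t ^ i / (i ! : ℝ) < exp t :=
    calc ∑ i ∈ range n, t ^ i / (i ! : ℝ)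
        < ∑ i ∈ range (n + 1), t ^ i / (i ! : ℝ) := by
          rw [sum_range_succ]
          have : 0 < t ^ n / (n ! : ℝ) := by positivity
          linarith
      _ ≤ exp t := sum_le_exp_of_nonneg ht.le _
  calc exp (-t) * ∑ i ∈ range n, t ^ i / (i ! : ℝ) < exp (-t) * exp t :=
        mul_lt_mul_of_pos_left hsum (exp_pos _)
    _ = 1 := by rw [← exp_add, neg_add_cancel, exp_zero]

noncomputable def rhoIteratedDerivFormula (k : ℕ) (t : ℝ) : ℝ :=
  (-1) ^ k * k ! * ((1 - exp (-t) * ∑ i ∈ range (k + 1), t ^ i / (i ! : ℝ)) / t ^ (k + 1))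

theorem hasDerivAt_rhoIteratedDerivFormula (k : ℕ) {t : ℝ} (ht : t ≠ 0) :
    HasDerivAt (rhoIteratedDerivFormula k) (rhoIteratedDerivFormula (k + 1) t) t := by
  have hden : HasDerivAt (fun s : ℝ => s ^ (k + 1)) ((k + 1 : ℕ) * t ^ k) t := hasDerivAt_pow _ t
  refine (((hasDerivAt_one_sub_exp_neg_mul_sum_range k t).div hden
    (pow_ne_zero _ ht)).const_mul ((-1 : ℝ) ^ k * k !)).congr_deriv ?_
  simp only [rhoIteratedDerivFormula]
  rw [sum_range_succ _ (k + 1), Nat.factorial_succ]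
  push_cast
  field_simp
  ring

theorem iteratedDeriv_rhoFun_eq_formula (k : ℕ) {t : ℝ} (ht : 0 < t) :
    iteratedDeriv k rhoFun t = rhoIteratedDerivFormula k t := by
  induction k generalizing t with
  | zero => simp [rhoFun, rhoIteratedDerivFormula]
  | succ k ih =>
    have heq : iteratedDeriv k rhoFun =ᶠ[nhds t] rhoIteratedDerivFormula k :=
      Filter.eventually_of_mem (Ioi_mem_nhds ht) fun s hs => ih hs
    rw [iteratedDeriv_succ, heq.deriv_eq]
    exact (hasDerivAt_rhoIteratedDerivFormula k ht.ne').deriv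

/-- For every `k ∈ ℕ` and `t > 0`, the `k`-th derivative of
`ρ(t) = (1 − e^{−t})/t` equals `(−1)^k k! (1 − e^{−t} Σ_{i=0}^k t^i/i!)/t^{k+1}`; consequently
it is positive for even `k` and negative for odd `k`. -/
theorem iteratedDeriv_rhoFun (k : ℕ) (t : ℝ) (ht : 0 < t) :
    iteratedDeriv k rhoFun t =
      (-1 : ℝ) ^ k * (Nat.factorial k : ℝ) *
        ((1 - Real.exp (-t) * ∑ i ∈ Finset.range (k + 1), t ^ i / (Nat.factorial i : ℝ)) /
          t ^ (k + 1)) ∧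
    (Even k → 0 < iteratedDeriv k rhoFun t) ∧
    (Odd k → iteratedDeriv k rhoFun t < 0) := by
  have heq := iteratedDeriv_rhoFun_eq_formula k ht
  have hpos : 0 < (k ! : ℝ) *
      ((1 - exp (-t) * ∑ i ∈ range (k + 1), t ^ i / (i ! : ℝ)) / t ^ (k + 1)) := by
    have hN := sub_pos.2 (exp_neg_mul_sum_range_pow_div_factorial_lt_one (k + 1) ht)
    positivity
  refine ⟨heq, fun hk => ?_, fun hk => ?_⟩
  · rw [heq, rhoIteratedDerivFormula, hk.neg_one_pow, one_mul]
    exact hpos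
  · rw [heq, rhoIteratedDerivFormula, hk.neg_one_pow, neg_one_mul, neg_mul]
    exact neg_neg_of_pos hpos
end

section
/- For integers ℓ ≥ 2, define g(λ, ℓ) = e^{−λ} · Σ_{i=0}^{ℓ−1} (ℓ−i) · ( C(λ,i)(e−1)^i − λ^i/i! ). Then for every integer λ ≥ ℓ, g(λ+1, ℓ) < g(λ, ℓ); that is, for fixed ℓ the quantity g(λ, ℓ) is strictly decreasing in λ on the integers λ ≥ ℓ. -/
/-!
Write `x = e - 1`, `P_y(t) = ∑_{k<t} y^k/k!` and `W_λ(t) = ∑_{k<t} C(λ,k) x^k`; exchanging the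
order of summation gives `e^λ g(λ,ℓ) = ∑_{n<ℓ} (W_λ(n+1) - P_λ(n+1))`, so it suffices to compare
the sums at `λ + 1` with `e` times the sums at `λ`.

By Pascal's rule the binomial sums telescope:
`∑_{n<ℓ} W_{λ+1}(n+1) = e ∑_{n<ℓ} W_λ(n+1) - x W_λ(ℓ)`.
Since `(λ+1)^k/k!` is the convolution of `λ^k/k!` with `1/k!`, `P_{λ+1}` is a convolution of
`P_λ`, and the tail bound `e - ∑_{k≤m} 1/k! ≤ (m+2)/((m+1)! (m+1))` yields
`∑_{n<ℓ} P_{λ+1}(n+1) > e ∑_{n<ℓ} P_λ(n+1) - x P_λ(ℓ) - P_λ(ℓ-1)`.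
What remains is `x P_λ(ℓ) + P_λ(ℓ-1) ≤ x W_λ(ℓ)` for `ℓ ≤ λ`, proved by induction on `λ`: the
step follows from `P_{λ+1}(t+1) ≤ P_λ(t+1) + x P_λ(t)` and Pascal's rule, and the diagonal case
`ℓ = λ` from Teicher's inequality `∑_{k<n} n^k/k! < e^n/2`.
-/

/-- The function `g(λ, ℓ) = e^{−λ} Σ_{i=0}^{ℓ−1} (ℓ−i)(C(λ,i)(e−1)^i − λ^i/i!)`. -/
noncomputable def gFun (lam ℓ : ℕ) : ℝ :=
  Real.exp (-(lam : ℝ)) * ∑ i ∈ Finset.range ℓ, ((ℓ - i : ℕ) : ℝ) *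
    ((lam.choose i : ℝ) * (Real.exp 1 - 1) ^ i - (lam : ℝ) ^ i / (Nat.factorial i : ℝ))

open Finset
open scoped Nat

noncomputable def expPartialSum (y : ℝ) (t : ℕ) : ℝ := ∑ k ∈ range t, y ^ k / k !

noncomputable def cumExpPartialSum (y : ℝ) (t : ℕ) : ℝ :=
  ∑ i ∈ range t, expPartialSum y (i + 1)

noncomputable def binomPartialSum (n t : ℕ) (x : ℝ) : ℝ :=
  ∑ k ∈ range t, (n.choose k : ℝ) * x ^ k

section expPartialSum

variable {y : ℝ}

theorem expPartialSum_succ (y : ℝ) (t : ℕ) :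
    expPartialSum y (t + 1) = expPartialSum y t + y ^ t / t ! :=
  sum_range_succ _ _

theorem expPartialSum_mono (hy : 0 ≤ y) : Monotone (expPartialSum y) := fun _ _ hst =>
  sum_le_sum_of_subset_of_nonneg (range_subset_range.2 hst) fun _ _ _ => by positivity

theorem expPartialSum_nonneg (hy : 0 ≤ y) (t : ℕ) : 0 ≤ expPartialSum y t :=
  sum_nonneg fun _ _ => by positivity

theorem one_le_expPartialSum (hy : 0 ≤ y) {t : ℕ} (ht : 1 ≤ t) : 1 ≤ expPartialSum y t := by
  simpa [expPartialSum] using expPartialSum_mono hy ht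

theorem expPartialSum_le_exp (hy : 0 ≤ y) (t : ℕ) : expPartialSum y t ≤ Real.exp y :=
  Real.sum_le_exp_of_nonneg hy t

theorem expPartialSum_one_succ (t : ℕ) :
    expPartialSum 1 (t + 1) = 1 + ∑ k ∈ range t, ((k + 1)! : ℝ)⁻¹ := by
  simp [expPartialSum, sum_range_succ', add_comm]

theorem add_pow_div_factorial (y z : ℝ) (m : ℕ) :
    (y + z) ^ m / m ! = ∑ k ∈ range (m + 1), z ^ k / k ! * (y ^ (m - k) / (m - k)!) := by
  rw [add_pow, sum_div, ← sum_range_reflect]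
  refine sum_congr rfl fun k hk => ?_
  have hkm : k ≤ m := Nat.le_of_lt_succ (mem_range.1 hk)
  rw [Nat.add_sub_cancel, Nat.sub_sub_self hkm, Nat.choose_symm hkm]
  have h := Nat.choose_mul_factorial_mul_factorial hkm
  field_simp
  rw [← h]
  push_cast
  ring

theorem expPartialSum_add (y z : ℝ) (n : ℕ) :
    expPartialSum (y + z) n = ∑ k ∈ range n, z ^ k / k ! * expPartialSum y (n - k) := by
  simp_rw [expPartialSum, add_pow_div_factorial, mul_sum]
  exact sum_range_diag_flip n fun k i => z ^ k / k ! * (y ^ i / i !)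

theorem expPartialSum_add_one_succ_le (hy : 0 ≤ y) (t : ℕ) :
    expPartialSum (y + 1) (t + 1)
      ≤ expPartialSum y (t + 1) + (Real.exp 1 - 1) * expPartialSum y t := by
  have htail : ∑ k ∈ range t, ((k + 1)! : ℝ)⁻¹ * expPartialSum y (t - k)
      ≤ (Real.exp 1 - 1) * expPartialSum y t := calc
    _ ≤ ∑ k ∈ range t, ((k + 1)! : ℝ)⁻¹ * expPartialSum y t :=
      sum_le_sum fun k _ => by gcongr; exact expPartialSum_mono hy (Nat.sub_le t k)
    _ = (expPartialSum 1 (t + 1) - 1) * expPartialSum y t := by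
      rw [← sum_mul, expPartialSum_one_succ]; ring
    _ ≤ (Real.exp 1 - 1) * expPartialSum y t := by
      gcongr
      · exact expPartialSum_nonneg hy t
      · exact expPartialSum_le_exp zero_le_one _
  rw [expPartialSum_add, sum_range_succ']
  simp only [one_pow, one_div, Nat.factorial_zero, Nat.cast_one, inv_one, one_mul, Nat.sub_zero,
    Nat.add_sub_add_right]
  linarith

end expPartialSum

section cumExpPartialSum

variable {y : ℝ}

theorem cumExpPartialSum_le (hy : 0 ≤ y) (t : ℕ) :
    cumExpPartialSum y t ≤ t * expPartialSum y t := by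
  unfold cumExpPartialSum
  simpa using sum_le_card_nsmul (range t) _ _ fun i hi =>
    expPartialSum_mono hy (Nat.succ_le_of_lt (mem_range.1 hi))

theorem cumExpPartialSum_sub_le (hy : 0 ≤ y) (t k : ℕ) :
    cumExpPartialSum y t - cumExpPartialSum y (t - k) ≤ k * expPartialSum y t := by
  rw [cumExpPartialSum, cumExpPartialSum, ← sum_range_add_sum_Ico _ (Nat.sub_le t k),
    add_sub_cancel_left]
  calc _ ≤ (Ico (t - k) t).card • expPartialSum y t :=
        sum_le_card_nsmul _ _ _ fun i hi =>
          expPartialSum_mono hy (Nat.succ_le_of_lt (mem_Ico.1 hi).2)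
    _ ≤ k * expPartialSum y t := by
      rw [nsmul_eq_mul, Nat.card_Ico]
      gcongr
      · exact expPartialSum_nonneg hy t
      · exact_mod_cast (by omega : t - (t - k) ≤ k)

theorem sum_expPartialSum_add_succ (y z : ℝ) (L : ℕ) :
    ∑ n ∈ range L, expPartialSum (y + z) (n + 1)
      = ∑ k ∈ range L, z ^ k / k ! * cumExpPartialSum y (L - k) := by
  simp_rw [expPartialSum_add, cumExpPartialSum, mul_sum]
  rw [← sum_range_diag_flip L fun k i => z ^ k / k ! * expPartialSum y (i + 1)]
  refine sum_congr rfl fun n _ => sum_congr rfl fun k hk => ?_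
  rw [Nat.sub_add_comm (Nat.le_of_lt_succ (mem_range.1 hk))]

end cumExpPartialSum

theorem mul_exp_one_sub_expPartialSum_lt (m : ℕ) :
    m * (Real.exp 1 - expPartialSum 1 (m + 1)) < (m ! : ℝ)⁻¹ := by
  have htail :
      Real.exp 1 - expPartialSum 1 (m + 1) ≤ (m + 1 + 1) / ((m + 1) * m ! * (m + 1)) := by
    have h := Real.exp_bound' zero_le_one le_rfl m.succ_pos
    simp only [one_pow, one_mul, Nat.factorial_succ, Nat.succ_eq_add_one] at h
    push_cast at h
    simp only [expPartialSum, one_pow]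
    linarith
  have hm : (0 : ℝ) < m ! := by positivity
  calc _ ≤ (m : ℝ) * ((m + 1 + 1) / ((m + 1) * m ! * (m + 1))) := by gcongr
    _ < (m ! : ℝ)⁻¹ := by
      rw [mul_div_assoc', div_lt_iff₀ (by positivity)]
      field_simp
      nlinarith

theorem sum_range_natCast_div_factorial_succ (m : ℕ) :
    ∑ k ∈ range m, (k : ℝ) / (k + 1)! = 1 - (m ! : ℝ)⁻¹ := by
  induction m with
  | zero => simp
  | succ m ih =>
    rw [sum_range_succ, ih, Nat.factorial_succ]
    push_cast
    field_simp
    ring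

theorem exp_one_mul_cumExpPartialSum_sub_lt {y : ℝ} (hy : 0 ≤ y) {m : ℕ} (hm : 1 ≤ m) :
    Real.exp 1 * cumExpPartialSum y (m + 1) - (Real.exp 1 - 1) * expPartialSum y (m + 1)
        - expPartialSum y m
      < ∑ n ∈ range (m + 1), expPartialSum (y + 1) (n + 1) := by
  set P := expPartialSum y
  set Q := cumExpPartialSum y
  have hQ : Q (m + 1) = Q m + P (m + 1) := sum_range_succ _ _
  have hconv : ∑ n ∈ range (m + 1), expPartialSum (y + 1) (n + 1)
      = Q (m + 1) + ∑ k ∈ range m, ((k + 1)! : ℝ)⁻¹ * Q (m - k) := by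
    rw [sum_expPartialSum_add_succ, sum_range_succ', add_comm]
    simp [Nat.add_sub_add_right, Q]
  have hlow : (expPartialSum 1 (m + 1) - 1) * Q m - (1 - (m ! : ℝ)⁻¹) * P m
      ≤ ∑ k ∈ range m, ((k + 1)! : ℝ)⁻¹ * Q (m - k) := calc
    _ = ∑ k ∈ range m, ((k + 1)! : ℝ)⁻¹ * (Q m - k * P m) := by
      simp_rw [mul_sub, sum_sub_distrib, ← sum_mul, ← mul_assoc, ← sum_mul,
        expPartialSum_one_succ, ← sum_range_natCast_div_factorial_succ, div_eq_inv_mul]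
      ring
    _ ≤ _ := sum_le_sum fun k _ => by
      gcongr
      linarith [cumExpPartialSum_sub_le hy m k]
  have hsmall : (Real.exp 1 - expPartialSum 1 (m + 1)) * Q m < (m ! : ℝ)⁻¹ * P m := calc
    _ ≤ (Real.exp 1 - expPartialSum 1 (m + 1)) * (m * P m) := by
      gcongr
      · linarith [expPartialSum_le_exp zero_le_one (m + 1)]
      · exact cumExpPartialSum_le hy m
    _ = m * (Real.exp 1 - expPartialSum 1 (m + 1)) * P m := by ring
    _ < (m ! : ℝ)⁻¹ * P m := by
      gcongr
      · linarith [one_le_expPartialSum hy hm]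
      · exact mul_exp_one_sub_expPartialSum_lt m
  rw [hconv, hQ]
  linarith

section binomPartialSum

variable (n : ℕ) (x : ℝ)

theorem binomPartialSum_succ_succ (t : ℕ) :
    binomPartialSum (n + 1) (t + 1) x
      = binomPartialSum n (t + 1) x + x * binomPartialSum n t x := by
  have hmul : x * binomPartialSum n t x = ∑ k ∈ range t, (n.choose k : ℝ) * x ^ (k + 1) := by
    rw [binomPartialSum, mul_sum]
    exact sum_congr rfl fun _ _ => by ring
  rw [hmul, binomPartialSum, binomPartialSum, sum_range_succ', sum_range_succ' _ t]
  simp only [Nat.choose_succ_succ', Nat.cast_add, add_mul, sum_add_distrib, Nat.choose_zero_right]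
  ring

theorem binomPartialSum_self : binomPartialSum n n x = (x + 1) ^ n - x ^ n := by
  rw [add_pow, sum_range_succ, binomPartialSum]
  simp [mul_comm]

theorem sum_binomPartialSum_succ (L : ℕ) :
    ∑ t ∈ range L, binomPartialSum (n + 1) (t + 1) x
      = (x + 1) * ∑ t ∈ range L, binomPartialSum n (t + 1) x - x * binomPartialSum n L x := by
  have hshift : ∑ t ∈ range L, binomPartialSum n t x
      = ∑ t ∈ range L, binomPartialSum n (t + 1) x - binomPartialSum n L x := by
    rw [eq_sub_iff_add_eq, ← sum_range_succ, sum_range_succ']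
    simp [binomPartialSum]
  simp_rw [binomPartialSum_succ_succ, sum_add_distrib, ← mul_sum, hshift]
  ring

end binomPartialSum

theorem factorial_add_two_mul_add_one_le (a d : ℕ) :
    (a + 2 * d + 1)! ≤ a ! * (a + d + 1) ^ (2 * d + 1) := by
  induction d generalizing a with
  | zero => simp [Nat.factorial_succ, mul_comm]
  | succ d ih =>
    calc (a + 2 * (d + 1) + 1)! = (a + 2 * d + 3) * (a + 1 + 2 * d + 1)! := by
          rw [show a + 2 * (d + 1) + 1 = a + 1 + 2 * d + 1 + 1 by ring, Nat.factorial_succ]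
          ring_nf
      _ ≤ (a + 2 * d + 3) * ((a + 1)! * (a + 1 + d + 1) ^ (2 * d + 1)) := by gcongr; exact ih _
      _ = (a + 2 * d + 3) * (a + 1) * a ! * (a + d + 2) ^ (2 * d + 1) := by
          rw [Nat.factorial_succ]; ring_nf
      _ ≤ (a + d + 2) ^ 2 * a ! * (a + d + 2) ^ (2 * d + 1) := by gcongr; nlinarith
      _ = a ! * (a + (d + 1) + 1) ^ (2 * (d + 1) + 1) := by ring

theorem pow_div_factorial_le_pow_div_factorial (a d : ℕ) :
    ((a + d + 1 : ℕ) : ℝ) ^ a / a !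
      ≤ ((a + d + 1 : ℕ) : ℝ) ^ (a + 2 * d + 1) / (a + 2 * d + 1)! := by
  rw [div_le_div_iff₀ (by positivity) (by positivity)]
  have h : ((a + 2 * d + 1)! : ℝ) ≤ a ! * ((a + d + 1 : ℕ) : ℝ) ^ (2 * d + 1) := by
    exact_mod_cast factorial_add_two_mul_add_one_le a d
  calc _ ≤ ((a + d + 1 : ℕ) : ℝ) ^ a * (a ! * ((a + d + 1 : ℕ) : ℝ) ^ (2 * d + 1)) := by
        gcongr
    _ = _ := by ring

/-- Teicher's inequality: pairing the terms of index `n - 1 - k` and `n + k` of the series of `e^n`,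
the first `n` terms make up less than half of it. -/
theorem two_mul_expPartialSum_self_lt (n : ℕ) : 2 * expPartialSum n n < Real.exp n := by
  have hpair : expPartialSum n n ≤ ∑ k ∈ range n, (n : ℝ) ^ (n + k) / (n + k)! := by
    rw [expPartialSum, ← sum_range_reflect]
    refine sum_le_sum fun k hk => ?_
    have h := pow_div_factorial_le_pow_div_factorial (n - 1 - k) k
    have hk := mem_range.1 hk
    rwa [show n - 1 - k + k + 1 = n by omega, show n - 1 - k + 2 * k + 1 = n + k by omega] at h
  have hsplit : expPartialSum n n + ∑ k ∈ range n, (n : ℝ) ^ (n + k) / (n + k)!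
      = expPartialSum n (n + n) := (sum_range_add _ n n).symm
  have hlast : 0 < (n : ℝ) ^ (n + n) / (n + n)! := by
    rcases Nat.eq_zero_or_pos n with rfl | hn
    · simp
    · positivity
  have hexp := expPartialSum_le_exp n.cast_nonneg (n + n + 1)
  rw [expPartialSum_succ] at hexp
  linarith

theorem exp_one_pow_five_div_two_le :
    Real.exp 1 ^ 5 / 2 ≤ (Real.exp 1 - 1) * (Real.exp 1 ^ 4 - (Real.exp 1 - 1) ^ 4) := by
  have h3 : 0 < Real.exp 1 - 2.7 := by linarith [Real.exp_one_gt_d9]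
  have h4 : 0 < 2.72 - Real.exp 1 := by linarith [Real.exp_one_lt_d9]
  nlinarith [mul_pos h3 h4, mul_pos (mul_pos h3 h4) h3, mul_pos (mul_pos h3 h4) h4, pow_pos h3 3,
    pow_pos h4 3, pow_pos h3 4, pow_pos h4 4]

/-- For `n = k + 1 ≥ 4` the factor `(1 - 1/e)^n ≤ (1 - 1/e)^4` in
`x W_n(n) = x e^n (1 - (1 - 1/e)^n)` is small enough for Teicher's inequality to suffice; the cases `n ≤ 3` are numerical. -/
theorem mul_expPartialSum_succ_add_le_self (k : ℕ) :
    (Real.exp 1 - 1) * expPartialSum (k + 1) (k + 1) + expPartialSum (k + 1) k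
      ≤ (Real.exp 1 - 1) * binomPartialSum (k + 1) (k + 1) (Real.exp 1 - 1) := by
  have he := Real.exp_one_gt_d9
  rcases lt_or_ge k 3 with hk | hk
  · interval_cases k <;> simp [expPartialSum, binomPartialSum, sum_range_succ] <;> norm_num <;>
      nlinarith
  obtain ⟨j, rfl⟩ : ∃ j, k = j + 3 := ⟨k - 3, by omega⟩
  rw [show ((j + 3 : ℕ) : ℝ) + 1 = ((j + 4 : ℕ) : ℝ) by push_cast; ring]
  set E := Real.exp 1
  set P := expPartialSum ((j + 4 : ℕ) : ℝ)
  have hx : 0 ≤ E - 1 := by linarith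
  have hteicher : 2 * P (j + 4) < E ^ (j + 4) := by
    simpa only [E, Real.exp_one_pow] using two_mul_expPartialSum_self_lt (j + 4)
  have hmono : P (j + 3) ≤ P (j + 4) := expPartialSum_mono (by positivity) (by omega)
  have hxpow : (E - 1) ^ (j + 4) ≤ (E - 1) ^ 4 * E ^ j := by
    rw [pow_add, mul_comm]
    gcongr
    linarith
  calc (E - 1) * P (j + 4) + P (j + 3) ≤ E * P (j + 4) := by linarith
    _ ≤ E * (E ^ (j + 4) / 2) := by gcongr; linarith
    _ = E ^ j * (E ^ 5 / 2) := by ring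
    _ ≤ E ^ j * ((E - 1) * (E ^ 4 - (E - 1) ^ 4)) := by gcongr; exact exp_one_pow_five_div_two_le
    _ ≤ (E - 1) * ((E - 1 + 1) ^ (j + 4) - (E - 1) ^ (j + 4)) := by
      rw [sub_add_cancel, pow_add E]
      nlinarith
    _ = _ := by rw [← binomPartialSum_self]

theorem mul_expPartialSum_succ_add_le {lam k : ℕ} (hk : k + 1 ≤ lam) :
    (Real.exp 1 - 1) * expPartialSum lam (k + 1) + expPartialSum lam k
      ≤ (Real.exp 1 - 1) * binomPartialSum lam (k + 1) (Real.exp 1 - 1) := by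
  induction lam generalizing k with
  | zero => omega
  | succ lam ih =>
    rcases Nat.lt_or_ge k lam with hlt | hge
    · obtain _ | j := k
      · simp [expPartialSum, binomPartialSum]
      set x := Real.exp 1 - 1
      have hx : 0 ≤ x := by linarith [Real.add_one_le_exp (1 : ℝ)]
      have ih₁ := ih (k := j + 1) hlt
      have ih₂ := ih (k := j) (by omega)
      have hP₂ := expPartialSum_add_one_succ_le lam.cast_nonneg (j + 1)
      have hP₁ := expPartialSum_add_one_succ_le lam.cast_nonneg j
      push_cast
      rw [binomPartialSum_succ_succ]
      nlinarith [mul_le_mul_of_nonneg_left hP₂ hx, mul_le_mul_of_nonneg_left ih₂ hx]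
    · obtain rfl : k = lam := by omega
      exact_mod_cast mul_expPartialSum_succ_add_le_self k

theorem gFun_eq (lam ℓ : ℕ) :
    gFun lam ℓ = Real.exp (-lam)
      * ∑ n ∈ range ℓ,
          (binomPartialSum lam (n + 1) (Real.exp 1 - 1) - expPartialSum lam (n + 1)) := by
  have hflip := sum_range_diag_flip ℓ fun k (_ : ℕ) =>
    (lam.choose k : ℝ) * (Real.exp 1 - 1) ^ k - (lam : ℝ) ^ k / (k ! : ℝ)
  simp only [sum_const, card_range, nsmul_eq_mul] at hflip
  rw [gFun]
  congr 1
  simp_rw [binomPartialSum, expPartialSum, ← sum_sub_distrib, hflip]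

theorem sum_binomPartialSum_sub_expPartialSum_succ_lt {lam m : ℕ} (hm : 1 ≤ m)
    (hlam : m + 1 ≤ lam) :
    ∑ n ∈ range (m + 1),
        (binomPartialSum (lam + 1) (n + 1) (Real.exp 1 - 1) - expPartialSum (lam + 1) (n + 1))
      < Real.exp 1 * ∑ n ∈ range (m + 1),
        (binomPartialSum lam (n + 1) (Real.exp 1 - 1) - expPartialSum lam (n + 1)) := by
  have hpoisson := exp_one_mul_cumExpPartialSum_sub_lt lam.cast_nonneg hm
  have hdom := mul_expPartialSum_succ_add_le hlam
  rw [sum_sub_distrib, sum_sub_distrib, sum_binomPartialSum_succ, sub_add_cancel]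
  rw [cumExpPartialSum] at hpoisson
  linarith

/-- For fixed `ℓ ≥ 2`, the quantity `g(λ, ℓ)` is strictly decreasing in
`λ` on the integers `λ ≥ ℓ`. -/
theorem gFun_strict_anti (ℓ : ℕ) (hℓ : 2 ≤ ℓ) (lam : ℕ) (hlam : ℓ ≤ lam) :
    gFun (lam + 1) ℓ < gFun lam ℓ := by
  obtain ⟨m, rfl⟩ : ∃ m, ℓ = m + 1 := ⟨ℓ - 1, by omega⟩
  have hstep := sum_binomPartialSum_sub_expPartialSum_succ_lt (by omega : 1 ≤ m) hlam
  rw [gFun_eq, gFun_eq, Nat.cast_succ, neg_add, Real.exp_add, mul_assoc]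
  gcongr
  rwa [Real.exp_neg, inv_mul_lt_iff₀ (Real.exp_pos 1)]
end

section
/- For a positive integer ρ, define ζ(ρ, γ) = Σ_{i=0}^{γ−2} (γ−1−i) · ( C(ρ,i)(e−1)^i − ρ^i/i! ). Then for every integer γ with 2 ≤ γ ≤ ρ + 1, ζ(ρ, γ) < ζ(ρ, γ+1); that is, for fixed ρ the quantity ζ(ρ, γ) is strictly increasing in γ in this range. -/
/-- The function `ζ(ρ, γ) = Σ_{i=0}^{γ−2} (γ−1−i)(C(ρ,i)(e−1)^i − ρ^i/i!)`. -/
noncomputable def zetaFun (ρ γ : ℕ) : ℝ :=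
  ∑ i ∈ Finset.range (γ - 1), ((γ - 1 - i : ℕ) : ℝ) *
    ((ρ.choose i : ℝ) * (Real.exp 1 - 1) ^ i - (ρ : ℝ) ^ i / (Nat.factorial i : ℝ))

/-!
Writing `a i = C(ρ,i)(e−1)^i − ρ^i/i!`, the increment `ζ(ρ, γ+1) − ζ(ρ, γ)` is the partial sum
`a 0 + ⋯ + a (γ−1)`. Since `C(ρ,i) i! = ρ(ρ−1)⋯(ρ−i+1)`, the sign of `a i` is that of
`∏_{j<i} (ρ−j)(e−1)/ρ − 1`, a product of decreasing factors; so once some `a i` with `i ≥ 1` is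
nonpositive, all later ones are. The partial sums therefore rise and then fall, and they are
positive at both ends: `a 0 + a 1 = ρ(e−2)` and `a 0 + ⋯ + a ρ = e^ρ − ∑_{i≤ρ} ρ^i/i!`.
-/

open Finset Real Nat

theorem prod_range_succ_le_one_of_antitone {f : ℕ → ℝ} (hf : Antitone f) (hf0 : 0 ≤ f)
    {i : ℕ} (hi : 1 ≤ i) (h : ∏ j ∈ range i, f j ≤ 1) : ∏ j ∈ range (i + 1), f j ≤ 1 := by
  rw [prod_range_succ]
  by_contra! hgt
  have hfi : 1 < f i := by
    by_contra! hfi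
    exact hgt.not_ge (mul_le_one₀ h (hf0 i) hfi)
  have : 1 < ∏ j ∈ range i, f j :=
    calc 1 < f i ^ i := one_lt_pow₀ hfi (by omega)
      _ = ∏ _j ∈ range i, f i := by rw [prod_const, card_range]
      _ ≤ ∏ j ∈ range i, f j :=
        prod_le_prod (fun _ _ => hf0 i) fun j hj => hf (mem_range.mp hj).le
  exact this.not_ge h

theorem sum_range_pos_of_nonpos_persists {a : ℕ → ℝ} {lo m n : ℕ}
    (ha : ∀ i, lo ≤ i → a i ≤ 0 → a (i + 1) ≤ 0) (hlo : lo ≤ m) (hmn : m ≤ n)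
    (hpos_lo : 0 < ∑ i ∈ range lo, a i) (hpos_n : 0 < ∑ i ∈ range n, a i) :
    0 < ∑ i ∈ range m, a i := by
  by_cases h : ∃ i ∈ Ico lo m, a i ≤ 0
  · obtain ⟨i, hi, hai⟩ := h
    rw [mem_Ico] at hi
    have tail : ∀ j, i ≤ j → a j ≤ 0 := fun j hj => by
      induction j, hj using Nat.le_induction with
      | base => exact hai
      | succ j hij ih => exact ha j (by omega) ih
    have hsplit := sum_range_add_sum_Ico a hmn
    have : ∑ j ∈ Ico m n, a j ≤ 0 :=
      sum_nonpos fun j hj => tail j (by rw [mem_Ico] at hj; omega)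
    linarith
  · push Not at h
    have hsplit := sum_range_add_sum_Ico a hlo
    have : 0 ≤ ∑ j ∈ Ico lo m, a j := sum_nonneg fun j hj => (h j hj).le
    linarith

noncomputable def zetaTerm (ρ i : ℕ) : ℝ :=
  (ρ.choose i : ℝ) * (exp 1 - 1) ^ i - (ρ : ℝ) ^ i / (i ! : ℝ)

theorem zetaFun_succ (ρ γ : ℕ) :
    zetaFun ρ (γ + 1) = zetaFun ρ γ + ∑ i ∈ range γ, zetaTerm ρ i := by
  rcases γ with _ | d
  · simp [zetaFun]
  have hpad : zetaFun ρ (d + 1) = ∑ i ∈ range (d + 1), ((d - i : ℕ) : ℝ) * zetaTerm ρ i := by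
    rw [sum_range_succ]
    simp [zetaFun, zetaTerm]
  rw [hpad, ← sum_add_distrib]
  refine sum_congr rfl fun i hi => ?_
  rw [Nat.add_sub_cancel, Nat.sub_add_comm (Nat.le_of_lt_succ (mem_range.mp hi))]
  push_cast
  simp only [zetaTerm]
  ring

theorem zetaTerm_eq_mul_prod {ρ : ℕ} (hρ : 0 < ρ) (i : ℕ) :
    zetaTerm ρ i = ρ ^ i / i ! * (∏ j ∈ range i, ((ρ - j : ℕ) : ℝ) * (exp 1 - 1) / ρ - 1) := by
  have hdesc : (ρ.choose i : ℝ) * i ! = ∏ j ∈ range i, ((ρ - j : ℕ) : ℝ) := by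
    rw [← Nat.cast_prod, ← descFactorial_eq_prod_range, descFactorial_eq_factorial_mul_choose]
    push_cast; ring
  rw [prod_div_distrib, prod_mul_distrib, ← hdesc, prod_const, prod_const, card_range, zetaTerm]
  have : (0 : ℝ) < ρ := by exact_mod_cast hρ
  field_simp

theorem zetaTerm_nonpos_succ {ρ i : ℕ} (hρ : 0 < ρ) (hi : 1 ≤ i) (h : zetaTerm ρ i ≤ 0) :
    zetaTerm ρ (i + 1) ≤ 0 := by
  have ht : 0 ≤ exp 1 - 1 := by linarith [exp_one_gt_two]
  have hf : Antitone fun j : ℕ => ((ρ - j : ℕ) : ℝ) * (exp 1 - 1) / ρ := fun j k hjk => by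
    dsimp only
    gcongr
  have hf0 : 0 ≤ fun j : ℕ => ((ρ - j : ℕ) : ℝ) * (exp 1 - 1) / ρ := fun j =>
    div_nonneg (mul_nonneg (Nat.cast_nonneg _) ht) (Nat.cast_nonneg _)
  rw [zetaTerm_eq_mul_prod hρ] at h ⊢
  have hprod := prod_range_succ_le_one_of_antitone hf hf0 hi
    (sub_nonpos.mp (nonpos_of_mul_nonpos_right h (by positivity)))
  exact mul_nonpos_of_nonneg_of_nonpos (by positivity) (sub_nonpos.mpr hprod)

theorem sum_range_two_zetaTerm (ρ : ℕ) : ∑ i ∈ range 2, zetaTerm ρ i = ρ * (exp 1 - 2) := by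
  simp [sum_range_succ, zetaTerm]
  ring

theorem sum_range_zetaTerm_self (ρ : ℕ) :
    ∑ i ∈ range (ρ + 1), zetaTerm ρ i = exp ρ - ∑ i ∈ range (ρ + 1), (ρ : ℝ) ^ i / i ! := by
  have hbinom : ∑ i ∈ range (ρ + 1), (ρ.choose i : ℝ) * (exp 1 - 1) ^ i = exp ρ := by
    conv_rhs => rw [← exp_one_pow, ← sub_add_cancel (exp 1) 1, add_pow]
    exact sum_congr rfl fun i _ => by ring
  rw [← hbinom, ← sum_sub_distrib]
  rfl

theorem sum_range_zetaTerm_self_pos {ρ : ℕ} (hρ : 0 < ρ) :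
    0 < ∑ i ∈ range (ρ + 1), zetaTerm ρ i := by
  rw [sum_range_zetaTerm_self, sub_pos]
  have hle := sum_le_exp_of_nonneg (Nat.cast_nonneg ρ) (ρ + 2)
  rw [sum_range_succ] at hle
  have : (0 : ℝ) < ρ ^ (ρ + 1) / (ρ + 1) ! := by positivity
  linarith

/-- For a fixed positive integer `ρ`, the quantity `ζ(ρ, γ)` is strictly
increasing in `γ` on the range `2 ≤ γ ≤ ρ + 1`. -/
theorem zetaFun_strict_mono (ρ : ℕ) (hρ : 1 ≤ ρ) (γ : ℕ) (h2 : 2 ≤ γ) (hγ : γ ≤ ρ + 1) :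
    zetaFun ρ γ < zetaFun ρ (γ + 1) := by
  rw [zetaFun_succ, lt_add_iff_pos_right]
  refine sum_range_pos_of_nonpos_persists (fun i hi => zetaTerm_nonpos_succ hρ (by omega))
    h2 hγ ?_ (sum_range_zetaTerm_self_pos hρ)
  rw [sum_range_two_zetaTerm]
  exact mul_pos (by exact_mod_cast hρ) (by linarith [exp_one_gt_two])
end
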